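/- arXiv:2305.09906 — 10 statements merged into one kernel-verified Lean document; each statement's English description precedes it below -/
import Mathlib

section
/- Suppose n = 2m (balanced design). For any observed count vector n⃗ = (n₁₁, n₁₀, n₀₁, n₀₀) arising from data of a balanced experiment, the exact confidence interval satisfies L_α(n⃗) ≤ T(n⃗) ≤ U_α(n⃗); that is, the interval I_α always contains the Neyman estimate (n₁₁ − n₀₁)/m. -/
open Finset

/-- Real value of a binary outcome. -/
noncomputable def b2r (b : Bool) : ℝ := if b then 1 else 0

/-- All assignments of `n` subjects in which exactly `m` receive treatment. -/
def Assign (n m : ℕ) : Finset (Fin n → Bool) :=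
  Finset.univ.filter fun z => (Finset.univ.filter fun i => z i = true).card = m

/-- Probability of the event `E` under the uniform distribution on `Assign n m`. -/
noncomputable def Pr (n m : ℕ) (E : (Fin n → Bool) → Prop) : ℝ :=
  haveI : DecidablePred E := fun z => Classical.propDecidable (E z)
  (((Assign n m).filter E).card : ℝ) / ((Assign n m).card : ℝ)

/-- The sample average treatment effect `τ(w)`.  For a table `w`, `(w i).1` is the
control potential outcome `w_i(0)` and `(w i).2` is the treatment potential outcome
`w_i(1)`. -/
noncomputable def sate (n : ℕ) (w : Fin n → Bool × Bool) : ℝ :=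
  (∑ j, (b2r (w j).2 - b2r (w j).1)) / (n : ℝ)

/-- Observed outcomes generated by the table `w` under the assignment `z`. -/
def obsOutcome (n : ℕ) (w : Fin n → Bool × Bool) (z : Fin n → Bool) : Fin n → Bool :=
  fun j => if z j then (w j).2 else (w j).1

/-- The Neyman difference-in-means estimator `T(Y, z)`. -/
noncomputable def neyman (n m : ℕ) (Y z : Fin n → Bool) : ℝ :=
  (∑ j, if z j then b2r (Y j) else 0) / (m : ℝ)
    - (∑ j, if z j then 0 else b2r (Y j)) / ((n : ℝ) - (m : ℝ))

/-- Permutation `p`-value of the table `w` given observed data `(Y, z)`. -/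
noncomputable def pval (n m : ℕ) (w : Fin n → Bool × Bool) (Y z : Fin n → Bool) : ℝ :=
  Pr n m fun z' =>
    |neyman n m (obsOutcome n w z') z' - sate n w| ≥ |neyman n m Y z - sate n w|

/-- The table `w` is possible given the observed data `(Y, z)`. -/
def PossibleTable (n : ℕ) (w : Fin n → Bool × Bool) (Y z : Fin n → Bool) : Prop :=
  ∀ j, (z j = true → (w j).2 = Y j) ∧ (z j = false → (w j).1 = Y j)

/-- Lower endpoint `L_α` of the exact confidence interval `I_α`. -/
noncomputable def Lb (n m : ℕ) (α : ℝ) (Y z : Fin n → Bool) : ℝ :=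
  sInf {t : ℝ | ∃ w, PossibleTable n w Y z ∧ α ≤ pval n m w Y z ∧ sate n w = t}

/-- Upper endpoint `U_α` of the exact confidence interval `I_α`. -/
noncomputable def Ub (n m : ℕ) (α : ℝ) (Y z : Fin n → Bool) : ℝ :=
  sSup {t : ℝ | ∃ w, PossibleTable n w Y z ∧ α ≤ pval n m w Y z ∧ sate n w = t}

/-- `vcount n w a b` is the number of subjects whose treatment potential outcome is `a`
and whose control potential outcome is `b`; e.g. `vcount n w true false = v₁₀`. -/
def vcount (n : ℕ) (w : Fin n → Bool × Bool) (a b : Bool) : ℕ :=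
  (Finset.univ.filter fun i => (w i).2 = a ∧ (w i).1 = b).card

/-- `ncount n Y z a b = n_{ab}`, the number of subjects with assignment `a` and
observed outcome `b`. -/
def ncount (n : ℕ) (Y z : Fin n → Bool) (a b : Bool) : ℕ :=
  (Finset.univ.filter fun j => z j = a ∧ Y j = b).card

/-- The pmf of the Neyman estimator `T(w, Z)` under the uniform random assignment. -/
noncomputable def pmfT (n m : ℕ) (w : Fin n → Bool × Bool) : ℝ → ℝ :=
  fun t => Pr n m fun z => neyman n m (obsOutcome n w z) z = t

/-- The lattice `m⁻¹ ℤ ⊆ ℝ`. -/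
def lattZ (m : ℕ) : Set ℝ := {x | ∃ k : ℤ, x = (k : ℝ) / (m : ℝ)}

/-- The lattice `m⁻¹ (2ℤ) ⊆ ℝ`. -/
def lattEven (m : ℕ) : Set ℝ := {x | ∃ k : ℤ, x = (2 * (k : ℝ)) / (m : ℝ)}

/-- The lattice `m⁻¹ (2ℤ + 1) ⊆ ℝ`. -/
def lattOdd (m : ℕ) : Set ℝ := {x | ∃ k : ℤ, x = (2 * (k : ℝ) + 1) / (m : ℝ)}

/-- `f` is symmetric about `μ` and decreasing away from `μ` along the lattice `L`
(symmetric–decreasing, SD). -/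
def SDon (f : ℝ → ℝ) (L : Set ℝ) (μ : ℝ) : Prop :=
  (∀ x : ℝ, μ + x ∈ L → f (μ - x) = f (μ + x)) ∧
    ∀ x y : ℝ, 0 ≤ x → x ≤ y → μ + x ∈ L → μ + y ∈ L → f (μ + y) ≤ f (μ + x)

/-- In a balanced design (`n = 2m`), the exact confidence interval
always contains the Neyman estimate: `L_α(n⃗) ≤ T(n⃗) ≤ U_α(n⃗)`. -/
theorem stmt0 (m : ℕ) (hm : 0 < m) (n : ℕ) (hn : n = 2 * m)
    (α : ℝ) (hα0 : 0 < α) (hα1 : α < 1)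
    (Y z : Fin n → Bool) (hz : z ∈ Assign n m) :
    Lb n m α Y z ≤ neyman n m Y z ∧ neyman n m Y z ≤ Ub n m α Y z := by
  have hmR : (0:ℝ) < m := by exact_mod_cast hm
  have hnm : (n:ℝ) - (m:ℝ) = m := by rw [hn]; push_cast; ring
  set wt : Fin n → Bool × Bool := fun j => if z j then ((!Y j), Y j) else (Y j, !Y j)
    with hwt
  set S : ℝ := ∑ j, b2r ((wt j).2) with hS
  have hcompl : ∀ j, b2r ((wt j).1) = 1 - b2r ((wt j).2) := by
    intro j; by_cases h : z j <;> cases hb : Y j <;> simp [hwt, h, hb, b2r]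
  -- Key: for any z' in Assign, the estimator equals (S - m)/m
  have key : ∀ z' : Fin n → Bool, z' ∈ Assign n m →
      neyman n m (obsOutcome n wt z') z' = (S - m) / m := by
    intro z' hz'
    have hcard : ((Finset.univ.filter fun i => z' i = true).card : ℕ) = m := by
      simpa [Assign] using hz'
    have hfalse : ((Finset.univ.filter fun j => z' j = false).card : ℝ) = m := by
      have h1 : (Finset.univ.filter fun i => z' i = true).card
          + (Finset.univ.filter fun i => ¬ (z' i = true)).card = n := by
        rw [Finset.card_filter_add_card_filter_not]
        simp
      have h2 : (Finset.univ.filter fun i => ¬ (z' i = true))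
          = (Finset.univ.filter fun i => z' i = false) := by
        apply Finset.filter_congr; intro i _; simp
      rw [h2, hcard] at h1
      have : (Finset.univ.filter fun j => z' j = false).card = m := by omega
      exact_mod_cast this
    unfold neyman obsOutcome
    rw [hnm]
    have e1 : (∑ j, if z' j then b2r (if z' j then (wt j).2 else (wt j).1) else 0)
        = ∑ j, if z' j then b2r ((wt j).2) else 0 := by
      apply Finset.sum_congr rfl; intro j _; by_cases h : z' j <;> simp [h]
    have e2 : (∑ j, if z' j then 0 else b2r (if z' j then (wt j).2 else (wt j).1))
        = ∑ j, if z' j then 0 else (1 - b2r ((wt j).2)) := by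
      apply Finset.sum_congr rfl; intro j _
      by_cases h : z' j <;> simp [h, hcompl j]
    rw [e1, e2, div_sub_div_same]
    congr 1
    have e3 : (∑ j, if z' j then b2r ((wt j).2) else 0)
        - (∑ j, if z' j then 0 else (1 - b2r ((wt j).2)))
        = (∑ j, b2r ((wt j).2)) - ∑ j, (if z' j = false then (1:ℝ) else 0) := by
      rw [← Finset.sum_sub_distrib, ← Finset.sum_sub_distrib]
      apply Finset.sum_congr rfl; intro j _
      by_cases h : z' j <;> simp [h]
    rw [e3, Finset.sum_boole, hfalse, ← hS]
  -- observed outcomes under z are Y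
  have hobs : obsOutcome n wt z = Y := by
    funext j; by_cases h : z j <;> simp [obsOutcome, hwt, h]
  have hTobs : neyman n m Y z = (S - m) / m := by
    rw [← hobs]; exact key z hz
  -- sate of the witness table
  have hsate : sate n wt = (S - m) / m := by
    unfold sate
    have e : (∑ j, (b2r ((wt j).2) - b2r ((wt j).1)))
        = 2 * S - n := by
      have : ∀ j ∈ Finset.univ, b2r ((wt j).2) - b2r ((wt j).1)
          = 2 * b2r ((wt j).2) - 1 := by
        intro j _; rw [hcompl j]; ring
      rw [Finset.sum_congr rfl this, Finset.sum_sub_distrib, ← Finset.mul_sum]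
      simp [hS]
    rw [e, hn]
    push_cast
    field_simp
  -- possibility
  have hposs : PossibleTable n wt Y z := by
    intro j
    constructor <;> intro h <;> simp [hwt, h]
  -- p-value is 1
  have hpval : pval n m wt Y z = 1 := by
    unfold pval Pr
    have hfil : ∀ z' ∈ Assign n m,
        |neyman n m (obsOutcome n wt z') z' - sate n wt|
          ≥ |neyman n m Y z - sate n wt| := by
      intro z' hz'
      rw [key z' hz', hTobs, hsate, sub_self]
    rw [Finset.filter_true_of_mem hfil]
    have : ((Assign n m).card : ℝ) ≠ 0 := by
      exact_mod_cast Finset.card_ne_zero_of_mem hz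
    field_simp
  -- membership of the Neyman estimate in the set defining Lb and Ub
  have hmem : neyman n m Y z ∈
      {t : ℝ | ∃ w, PossibleTable n w Y z ∧ α ≤ pval n m w Y z ∧ sate n w = t} := by
    exact ⟨wt, hposs, by rw [hpval]; linarith, hsate.trans hTobs.symm⟩
  -- bounds for sate
  have hnR : (0:ℝ) < n := by rw [hn]; push_cast; linarith
  have hbound : ∀ w : Fin n → Bool × Bool, -1 ≤ sate n w ∧ sate n w ≤ 1 := by
    intro w
    have hterm : ∀ j ∈ Finset.univ, (-1:ℝ) ≤ b2r ((w j).2) - b2r ((w j).1) := by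
      intro j _; cases h1 : (w j).1 <;> cases h2 : (w j).2 <;>
        simp [b2r, h1, h2] <;> norm_num
    have hterm' : ∀ j ∈ Finset.univ, b2r ((w j).2) - b2r ((w j).1) ≤ (1:ℝ) := by
      intro j _; cases h1 : (w j).1 <;> cases h2 : (w j).2 <;>
        simp [b2r, h1, h2] <;> norm_num
    have hlow : -(n:ℝ) ≤ ∑ j, (b2r ((w j).2) - b2r ((w j).1)) := by
      calc -(n:ℝ) = ∑ _j : Fin n, (-1:ℝ) := by simp
        _ ≤ _ := Finset.sum_le_sum hterm
    have hhigh : (∑ j, (b2r ((w j).2) - b2r ((w j).1))) ≤ (n:ℝ) := by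
      calc _ ≤ ∑ _j : Fin n, (1:ℝ) := Finset.sum_le_sum hterm'
        _ = (n:ℝ) := by simp
    constructor
    · unfold sate
      rw [le_div_iff₀ hnR]
      linarith
    · unfold sate
      rw [div_le_iff₀ hnR]
      linarith
  have hbdd_below : BddBelow
      {t : ℝ | ∃ w, PossibleTable n w Y z ∧ α ≤ pval n m w Y z ∧ sate n w = t} := by
    refine ⟨-1, ?_⟩
    rintro t ⟨w, -, -, rfl⟩
    exact (hbound w).1
  have hbdd_above : BddAbove
      {t : ℝ | ∃ w, PossibleTable n w Y z ∧ α ≤ pval n m w Y z ∧ sate n w = t} := by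
    refine ⟨1, ?_⟩
    rintro t ⟨w, -, -, rfl⟩
    exact (hbound w).2
  exact ⟨csInf_le hbdd_below hmem, le_csSup hbdd_above hmem⟩
end

section
/- Fix n, m ∈ ℤ_{>0} with 0 < m < n, a potential outcome table y, and α ∈ (0,1). Then P(τ(y) ∈ I_α(Y,Z)) ≥ 1 − α, where the probability is over the uniform random assignment Z; that is, the exact confidence interval I_α covers the sample average treatment effect with probability at least 1 − α for every finite sample size and every configuration of potential outcomes. -/
open Finset

lemma assign_nonempty (n m : ℕ) (h : m ≤ n) : (Assign n m).Nonempty := by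
  classical
  obtain ⟨s, -, hcard⟩ := Finset.exists_subset_card_eq (α := Fin n)
    (s := Finset.univ) (n := m) (by simpa using h)
  refine ⟨fun i => i ∈ s, ?_⟩
  simp only [Assign, mem_filter, mem_univ, true_and]
  rw [← hcard]
  congr 1
  ext i; simp

lemma sate_abs_le (n : ℕ) (w : Fin n → Bool × Bool) : |sate n w| ≤ 1 := by
  have h1 : |∑ j, (b2r (w j).2 - b2r (w j).1)| ≤ (n : ℝ) := by
    calc |∑ j, (b2r (w j).2 - b2r (w j).1)| ≤ ∑ j : Fin n, |b2r (w j).2 - b2r (w j).1| :=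
      Finset.abs_sum_le_sum_abs _ _
    _ ≤ ∑ _j : Fin n, (1:ℝ) := by
        refine Finset.sum_le_sum fun j _ => ?_
        unfold b2r; rcases (w j).2 <;> rcases (w j).1 <;> norm_num
    _ = n := by simp
  rcases Nat.eq_zero_or_pos n with hn | hn
  · subst hn; simp [sate]
  · rw [sate, abs_div, abs_of_pos (by exact_mod_cast hn : (0:ℝ) < n),
      div_le_one (by exact_mod_cast hn)]
    exact h1

/-- Exact coverage: for any `0 < m < n`, any potential outcome table `y`
and any `α ∈ (0,1)`, the interval `I_α(Y, Z) = [L_α, U_α]` covers the sample average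
treatment effect `τ(y)` with probability at least `1 - α` over the uniform random
assignment `Z`. -/
theorem stmt1 (n m : ℕ) (hm : 0 < m) (hmn : m < n)
    (y : Fin n → Bool × Bool) (α : ℝ) (hα0 : 0 < α) (hα1 : α < 1) :
    1 - α ≤ Pr n m fun z =>
      Lb n m α (obsOutcome n y z) z ≤ sate n y ∧
        sate n y ≤ Ub n m α (obsOutcome n y z) z := by
  classical
  set A := Assign n m with hA
  have hAne : A.Nonempty := assign_nonempty n m hmn.le
  have hN : (0:ℝ) < (A.card : ℝ) := by exact_mod_cast card_pos.2 hAne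
  set τ := sate n y with hτ
  set s : (Fin n → Bool) → ℝ := fun z => |neyman n m (obsOutcome n y z) z - τ| with hs
  -- p-value of the true table, as a function of data z
  have hpval : ∀ z, pval n m y (obsOutcome n y z) z
      = ((A.filter fun z' => s z' ≥ s z).card : ℝ) / (A.card : ℝ) := by
    intro z
    unfold pval Pr
    congr 2
  -- bad event
  set B := A.filter (fun z => pval n m y (obsOutcome n y z) z < α) with hB
  have hBcard : (B.card : ℝ) ≤ α * (A.card : ℝ) := by
    rcases B.eq_empty_or_nonempty with h | h
    · rw [h]; simpa using le_of_lt (mul_pos hα0 hN)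
    · obtain ⟨z0, hz0B, hz0min⟩ := B.exists_min_image s h
      have hsub : B ⊆ A.filter (fun z' => s z' ≥ s z0) := by
        intro z hz
        exact mem_filter.2 ⟨(mem_filter.1 hz).1, hz0min z hz⟩
      have hle : (B.card : ℝ) ≤ ((A.filter fun z' => s z' ≥ s z0).card : ℝ) := by
        exact_mod_cast Finset.card_le_card hsub
      have hlt : ((A.filter fun z' => s z' ≥ s z0).card : ℝ) < α * (A.card : ℝ) := by
        have := (mem_filter.1 hz0B).2
        rw [hpval z0, div_lt_iff₀ hN] at this
        exact this
      linarith
  -- good z implies coverage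
  have hgood : ∀ z ∈ A, z ∉ B →
      Lb n m α (obsOutcome n y z) z ≤ τ ∧ τ ≤ Ub n m α (obsOutcome n y z) z := by
    intro z hzA hzB
    have hα : α ≤ pval n m y (obsOutcome n y z) z := by
      by_contra h
      exact hzB (mem_filter.2 ⟨hzA, lt_of_not_ge h⟩)
    have hposs : PossibleTable n y (obsOutcome n y z) z := by
      intro j
      constructor <;> intro h <;> simp [obsOutcome, h]
    set S : Set ℝ := {t : ℝ | ∃ w, PossibleTable n w (obsOutcome n y z) z ∧
        α ≤ pval n m w (obsOutcome n y z) z ∧ sate n w = t} with hS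
    have hmem : τ ∈ S := ⟨y, hposs, hα, rfl⟩
    have hbddB : BddBelow S := by
      refine ⟨-1, ?_⟩
      rintro t ⟨w, -, -, rfl⟩
      exact (abs_le.1 (sate_abs_le n w)).1
    have hbddA : BddAbove S := by
      refine ⟨1, ?_⟩
      rintro t ⟨w, -, -, rfl⟩
      exact (abs_le.1 (sate_abs_le n w)).2
    exact ⟨csInf_le hbddB hmem, le_csSup hbddA hmem⟩
  -- put together
  have hsub2 : A \ B ⊆ A.filter (fun z =>
      Lb n m α (obsOutcome n y z) z ≤ τ ∧ τ ≤ Ub n m α (obsOutcome n y z) z) := by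
    intro z hz
    obtain ⟨hzA, hzB⟩ := mem_sdiff.1 hz
    exact mem_filter.2 ⟨hzA, hgood z hzA hzB⟩
  unfold Pr
  rw [← hA, le_div_iff₀ hN]
  have hBsub : B ⊆ A := filter_subset _ _
  have hcard2 : ((A \ B).card : ℝ) = (A.card : ℝ) - (B.card : ℝ) := by
    rw [Finset.card_sdiff_of_subset hBsub]
    push_cast [Nat.cast_sub (Finset.card_le_card hBsub)]
    ring
  refine le_trans (b := ((A \ B).card : ℝ)) (by linarith)
    (Nat.cast_le.2 (Finset.card_le_card ?_))
  intro z hz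
  obtain ⟨hzA, hzB⟩ := mem_sdiff.1 hz
  simp only [Finset.mem_filter]
  exact ⟨hzA, hgood z hzA hzB⟩
end

section
/- Suppose n = 2m. For any observed count vector n⃗ and any α ∈ (0,1), the length of the exact confidence interval satisfies |I_α(n⃗)| = U_α(n⃗) − L_α(n⃗) ≤ √(32 log(2/α) / n); in particular the exact interval shrinks at the parametric rate n^{−1/2}. -/
open Finset

/-!
A table `w` with `p`-value at least `α` has `τ(w)` within `√(2 log(2/α) / m)` of the observed
estimate `T`, so `I_α` lies in a ball around `T`. This is a Hoeffding bound for the randomization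
distribution: `m (T(w, Z) - τ(w)) = S(Z) - E S(Z)` for the treated sum
`S(Z) = ∑_{Z_j = 1} (w_j(0) + w_j(1))` of terms in `[0, 2]`. To bound the moment generating
function of `S`, split the `2m` units into `m` pairs: after averaging over a uniform relabelling of
the units, a uniform balanced assignment treats one unit of each pair, chosen independently, and
the moment generating function factors into `m` terms `cosh (λ d_k) ≤ exp (λ² d_k² / 2)`.
-/

open Equiv Real

lemma exp_add_exp_neg_le {x δ : ℝ} (h : |x| ≤ δ) :
    exp x + exp (-x) ≤ 2 * exp (δ ^ 2 / 2) := by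
  have hsq : x ^ 2 ≤ δ ^ 2 := sq_le_sq' (abs_le.mp h).1 (abs_le.mp h).2
  calc exp x + exp (-x) = 2 * cosh x := by rw [cosh_eq]; ring
    _ ≤ 2 * exp (x ^ 2 / 2) := by gcongr; exact cosh_le_exp_half_sq x
    _ ≤ 2 * exp (δ ^ 2 / 2) := by gcongr

lemma card_filter_le_abs_le_exp_mul_sum {ι : Type*} (s : Finset ι) (X : ι → ℝ) {l t : ℝ}
    (hl : 0 ≤ l) :
    (#{i ∈ s | t ≤ |X i|} : ℝ)
      ≤ exp (-(l * t)) * ∑ i ∈ s, (exp (l * X i) + exp (-l * X i)) := by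
  rw [Finset.natCast_card_filter, Finset.mul_sum]
  refine Finset.sum_le_sum fun i _ => ?_
  split_ifs with ht
  · have habs : exp (l * |X i|) ≤ exp (l * X i) + exp (-l * X i) := by
      rcases abs_cases (X i) with ⟨h, -⟩ | ⟨h, -⟩ <;> rw [h] <;>
        simp [neg_mul, (exp_pos _).le]
    calc (1 : ℝ) ≤ exp (-(l * t)) * exp (l * |X i|) := by
          rw [← exp_add, one_le_exp_iff]; nlinarith
      _ ≤ _ := by gcongr
  · positivity

noncomputable def treatedSum {n : ℕ} (c : Fin n → ℝ) (z : Fin n → Bool) : ℝ :=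
  ∑ i, if z i then c i else 0

lemma treatedSum_comp_perm {n : ℕ} (c : Fin n → ℝ) (z : Fin n → Bool) (σ : Perm (Fin n)) :
    treatedSum c (z ∘ σ) = treatedSum (c ∘ σ.symm) z := by
  unfold treatedSum
  rw [← Equiv.sum_comp σ.symm]
  simp

section Assignments

variable {n m : ℕ}

lemma comp_perm_mem_assign_iff {z : Fin n → Bool} (σ : Perm (Fin n)) :
    z ∘ σ ∈ Assign n m ↔ z ∈ Assign n m := by
  simp only [Assign, mem_filter, mem_univ, true_and]
  rw [Finset.card_equiv σ (t := {i | z i = true}) (by simp)]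

lemma exists_perm_comp_eq {z z' : Fin n → Bool} (hz : z ∈ Assign n m)
    (hz' : z' ∈ Assign n m) : ∃ σ : Perm (Fin n), z' ∘ σ = z := by
  simp only [Assign, mem_filter, mem_univ, true_and] at hz hz'
  obtain ⟨σ, hσ⟩ := Perm.exists_map_finset_eq _ _ (hz.trans hz'.symm)
  refine ⟨σ, funext fun i => Bool.eq_iff_iff.mpr ?_⟩
  simpa using (congrArg (σ i ∈ ·) hσ).symm

lemma sum_comp_perm_eq_of_mem_assign (F : (Fin n → Bool) → ℝ) {z z' : Fin n → Bool}
    (hz : z ∈ Assign n m) (hz' : z' ∈ Assign n m) :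
    ∑ σ : Perm (Fin n), F (z ∘ σ) = ∑ σ : Perm (Fin n), F (z' ∘ σ) := by
  obtain ⟨g, rfl⟩ := exists_perm_comp_eq hz hz'
  exact Equiv.sum_comp (Equiv.mulLeft g) (fun σ => F (z' ∘ σ))

lemma card_perm_mul_sum_assign (F : (Fin n → Bool) → ℝ) {z₀ : Fin n → Bool}
    (hz₀ : z₀ ∈ Assign n m) :
    Fintype.card (Perm (Fin n)) * ∑ z ∈ Assign n m, F z
      = #(Assign n m) * ∑ σ : Perm (Fin n), F (z₀ ∘ σ) := by
  have hinv (σ : Perm (Fin n)) : ∑ z ∈ Assign n m, F (z ∘ σ) = ∑ z ∈ Assign n m, F z :=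
    Finset.sum_nbij' (· ∘ σ) (· ∘ σ.symm) (fun z hz => (comp_perm_mem_assign_iff σ).mpr hz)
      (fun z hz => (comp_perm_mem_assign_iff σ.symm).mpr hz)
      (fun z _ => by ext; simp) (fun z _ => by ext; simp) (fun _ _ => rfl)
  calc Fintype.card (Perm (Fin n)) * ∑ z ∈ Assign n m, F z
      = ∑ σ : Perm (Fin n), ∑ z ∈ Assign n m, F (z ∘ σ) := by
        simp [hinv, Finset.card_univ]
    _ = ∑ z ∈ Assign n m, ∑ σ : Perm (Fin n), F (z₀ ∘ σ) := by
        rw [Finset.sum_comm]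
        exact Finset.sum_congr rfl fun z hz => sum_comp_perm_eq_of_mem_assign F hz hz₀
    _ = _ := by simp

end Assignments

section Pairs

variable {m : ℕ}

/-- Unit `finProdFinEquiv (s, k)` is slot `s` of pair `k`; the assignment treats slot `ε k` of
every pair `k`. -/
def pairAssign (ε : Fin m → Fin 2) : Fin (2 * m) → Bool :=
  fun i => decide ((finProdFinEquiv.symm i).1 = ε (finProdFinEquiv.symm i).2)

lemma sum_fin_two_mul_eq_sum_pairs (f : Fin (2 * m) → ℝ) :
    ∑ i, f i = ∑ k : Fin m, (f (finProdFinEquiv (0, k)) + f (finProdFinEquiv (1, k))) := by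
  rw [← Equiv.sum_comp finProdFinEquiv, Fintype.sum_prod_type_right]
  simp [Fin.sum_univ_two]

lemma treatedSum_pairAssign (c : Fin (2 * m) → ℝ) (ε : Fin m → Fin 2) :
    treatedSum c (pairAssign ε) = ∑ k, c (finProdFinEquiv (ε k, k)) := by
  rw [treatedSum, sum_fin_two_mul_eq_sum_pairs]
  refine Finset.sum_congr rfl fun k _ => ?_
  simp only [pairAssign, Equiv.symm_apply_apply]
  generalize ε k = s
  fin_cases s <;> simp

lemma pairAssign_mem_assign (ε : Fin m → Fin 2) : pairAssign ε ∈ Assign (2 * m) m := by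
  have h := treatedSum_pairAssign (fun _ => (1 : ℝ)) ε
  simp only [treatedSum, ← Finset.sum_filter, Finset.sum_const, nsmul_eq_mul, mul_one,
    Finset.card_univ, Fintype.card_fin] at h
  simpa [Assign] using h

variable {a b : ℝ} (c : Fin (2 * m) → ℝ)

lemma sum_exp_treatedSum_pairAssign_le (hc : ∀ i, c i ∈ Set.Icc a b) (l : ℝ) :
    ∑ ε : Fin m → Fin 2, exp (l * (treatedSum c (pairAssign ε) - (∑ i, c i) / 2))
      ≤ 2 ^ m * exp (m * (l * (b - a)) ^ 2 / 8) := by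
  set u : Fin m → Fin 2 → ℝ := fun k s => c (finProdFinEquiv (s, k))
  have hfactor (ε : Fin m → Fin 2) :
      exp (l * (treatedSum c (pairAssign ε) - (∑ i, c i) / 2))
        = ∏ k, exp (l * (u k (ε k) - (u k 0 + u k 1) / 2)) := by
    rw [← exp_sum, treatedSum_pairAssign, sum_fin_two_mul_eq_sum_pairs, Finset.sum_div,
      ← Finset.sum_sub_distrib, Finset.mul_sum]
  have hpair (k : Fin m) :
      ∑ s, exp (l * (u k s - (u k 0 + u k 1) / 2)) ≤ 2 * exp ((l * (b - a)) ^ 2 / 8) := by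
    have hx : |l * ((u k 0 - u k 1) / 2)| ≤ |l| * (b - a) / 2 := by
      have h0 : u k 0 ∈ Set.Icc a b := hc _
      have h1 : u k 1 ∈ Set.Icc a b := hc _
      rw [abs_mul, mul_div_assoc, abs_div, abs_two]
      gcongr
      exact abs_sub_le_iff.mpr ⟨by linarith [h0.2, h1.1], by linarith [h0.1, h1.2]⟩
    rw [Fin.sum_univ_two]
    convert exp_add_exp_neg_le hx using 3
    · ring
    · ring
    · rw [div_pow, mul_pow, mul_pow, sq_abs]; ring
  calc ∑ ε : Fin m → Fin 2, exp (l * (treatedSum c (pairAssign ε) - (∑ i, c i) / 2))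
      = ∏ k, ∑ s, exp (l * (u k s - (u k 0 + u k 1) / 2)) := by
        simp_rw [hfactor]
        exact (Fintype.prod_sum fun k s => exp (l * (u k s - (u k 0 + u k 1) / 2))).symm
    _ ≤ ∏ _k : Fin m, 2 * exp ((l * (b - a)) ^ 2 / 8) :=
        Finset.prod_le_prod (fun _ _ => by positivity) fun k _ => hpair k
    _ = 2 ^ m * exp (m * (l * (b - a)) ^ 2 / 8) := by
        rw [Finset.prod_const, Finset.card_univ, Fintype.card_fin, mul_pow, ← exp_nat_mul]
        ring_nf

lemma sum_exp_treatedSum_assign_le (hc : ∀ i, c i ∈ Set.Icc a b) (l : ℝ) :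
    ∑ z ∈ Assign (2 * m) m, exp (l * (treatedSum c z - (∑ i, c i) / 2))
      ≤ #(Assign (2 * m) m) * exp (m * (l * (b - a)) ^ 2 / 8) := by
  set A := Assign (2 * m) m
  set F : (Fin (2 * m) → Bool) → ℝ := fun z => exp (l * (treatedSum c z - (∑ i, c i) / 2))
  set B := exp (m * (l * (b - a)) ^ 2 / 8)
  set N := (Fintype.card (Perm (Fin (2 * m))) : ℝ)
  have hflips (σ : Perm (Fin (2 * m))) :
      ∑ ε : Fin m → Fin 2, F (pairAssign ε ∘ σ) ≤ 2 ^ m * B := by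
    have hsum : ∑ i, (c ∘ σ.symm) i = ∑ i, c i := Equiv.sum_comp σ.symm c
    simpa only [F, treatedSum_comp_perm, hsum] using
      sum_exp_treatedSum_pairAssign_le (c ∘ σ.symm) (fun i => hc _) l
  refine le_of_mul_le_mul_left ?_ (by positivity : (0 : ℝ) < 2 ^ m * N)
  calc 2 ^ m * N * ∑ z ∈ A, F z
      = ∑ ε : Fin m → Fin 2, N * ∑ z ∈ A, F z := by
        simp [Finset.card_univ]; ring
    _ = ∑ ε : Fin m → Fin 2, #A * ∑ σ : Perm (Fin (2 * m)), F (pairAssign ε ∘ σ) :=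
        Finset.sum_congr rfl fun ε _ => card_perm_mul_sum_assign F (pairAssign_mem_assign ε)
    _ = #A * ∑ σ : Perm (Fin (2 * m)), ∑ ε : Fin m → Fin 2, F (pairAssign ε ∘ σ) := by
        rw [← Finset.mul_sum, Finset.sum_comm]
    _ ≤ #A * ∑ _σ : Perm (Fin (2 * m)), 2 ^ m * B := by
        gcongr with σ; exact hflips σ
    _ = 2 ^ m * N * (#A * B) := by
        simp [N, Finset.card_univ]; ring

lemma card_filter_le_abs_treatedSum_sub_le (hc : ∀ i, c i ∈ Set.Icc a b) {l t : ℝ}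
    (hl : 0 ≤ l) :
    (#{z ∈ Assign (2 * m) m | t ≤ |treatedSum c z - (∑ i, c i) / 2|} : ℝ)
      ≤ 2 * #(Assign (2 * m) m) * exp (-(l * t) + m * (l * (b - a)) ^ 2 / 8) := by
  have hpos := sum_exp_treatedSum_assign_le c hc l
  have hneg := sum_exp_treatedSum_assign_le c hc (-l)
  rw [neg_mul l, neg_sq] at hneg
  calc _ ≤ exp (-(l * t)) * ∑ z ∈ Assign (2 * m) m,
          (exp (l * (treatedSum c z - (∑ i, c i) / 2))
            + exp (-l * (treatedSum c z - (∑ i, c i) / 2))) :=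
        card_filter_le_abs_le_exp_mul_sum _ _ hl
    _ ≤ exp (-(l * t)) * (#(Assign (2 * m) m) * exp (m * (l * (b - a)) ^ 2 / 8)
          + #(Assign (2 * m) m) * exp (m * (l * (b - a)) ^ 2 / 8)) := by
        rw [Finset.sum_add_distrib]; gcongr
    _ = _ := by rw [exp_add]; ring

end Pairs

noncomputable def potentialOutcomeSum {n : ℕ} (w : Fin n → Bool × Bool) (j : Fin n) : ℝ :=
  b2r (w j).1 + b2r (w j).2

lemma potentialOutcomeSum_mem_Icc {n : ℕ} (w : Fin n → Bool × Bool) (j : Fin n) :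
    potentialOutcomeSum w j ∈ Set.Icc 0 2 := by
  unfold potentialOutcomeSum b2r
  split_ifs <;> norm_num

lemma mul_neyman_sub_sate {m : ℕ} (hm : 0 < m) (w : Fin (2 * m) → Bool × Bool)
    (z : Fin (2 * m) → Bool) :
    m * (neyman (2 * m) m (obsOutcome (2 * m) w z) z - sate (2 * m) w)
      = treatedSum (potentialOutcomeSum w) z - (∑ j, potentialOutcomeSum w j) / 2 := by
  have hm' : (m : ℝ) ≠ 0 := by positivity
  set y₀ : Fin (2 * m) → ℝ := fun j => b2r (w j).1
  set y₁ : Fin (2 * m) → ℝ := fun j => b2r (w j).2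
  have htreated :
      (∑ j, if z j then b2r (obsOutcome (2 * m) w z j) else 0) = treatedSum y₁ z :=
    Finset.sum_congr rfl fun j _ => by cases h : z j <;> simp [obsOutcome, h, y₁]
  have hcontrol : (∑ j, if z j then 0 else b2r (obsOutcome (2 * m) w z j))
      = ∑ j, y₀ j - treatedSum y₀ z := by
    rw [treatedSum, ← Finset.sum_sub_distrib]
    exact Finset.sum_congr rfl fun j _ => by cases h : z j <;> simp [obsOutcome, h, y₀]
  have hpot : treatedSum (potentialOutcomeSum w) z = treatedSum y₀ z + treatedSum y₁ z := by
    rw [treatedSum, treatedSum, treatedSum, ← Finset.sum_add_distrib]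
    exact Finset.sum_congr rfl fun j _ => by cases z j <;> simp [potentialOutcomeSum, y₀, y₁]
  rw [neyman, sate, htreated, hcontrol, hpot, Finset.sum_sub_distrib]
  simp only [potentialOutcomeSum, Finset.sum_add_distrib]
  push_cast
  field_simp
  ring

lemma pr_le_abs_neyman_sub_sate_le {m : ℕ} (hm : 0 < m) (w : Fin (2 * m) → Bool × Bool)
    {t : ℝ} (ht : 0 ≤ t) :
    Pr (2 * m) m (fun z => t ≤ |neyman (2 * m) m (obsOutcome (2 * m) w z) z - sate (2 * m) w|)
      ≤ 2 * exp (-(m * t ^ 2 / 2)) := by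
  set c := potentialOutcomeSum w
  have hcount := card_filter_le_abs_treatedSum_sub_le c (potentialOutcomeSum_mem_Icc w)
    (t := m * t) ht
  rw [Pr]
  refine div_le_of_le_mul₀ (by positivity) (by positivity) ?_
  calc _ ≤ (#{z ∈ Assign (2 * m) m | m * t ≤ |treatedSum c z - (∑ j, c j) / 2|} : ℝ) := by
        refine Nat.cast_le.mpr (Finset.card_le_card fun z hz => ?_)
        simp only [Finset.mem_filter] at hz ⊢
        rw [← mul_neyman_sub_sate hm, abs_mul, Nat.abs_cast]
        exact ⟨hz.1, by gcongr; exact hz.2⟩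
    _ ≤ _ := hcount
    _ = _ := by ring_nf

lemma pval_le {m : ℕ} (hm : 0 < m) (w : Fin (2 * m) → Bool × Bool)
    (Y z : Fin (2 * m) → Bool) :
    pval (2 * m) m w Y z
      ≤ 2 * exp (-(m * |neyman (2 * m) m Y z - sate (2 * m) w| ^ 2 / 2)) :=
  pr_le_abs_neyman_sub_sate_le hm w (abs_nonneg _)

lemma two_mul_le_sqrt_of_le_two_mul_exp {α x t : ℝ} (hα : 0 < α) (hx : 0 < x)
    (h : α ≤ 2 * exp (-(x * t ^ 2 / 2))) : 2 * t ≤ √(32 * log (2 / α) / (2 * x)) := by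
  have hlog : x * t ^ 2 / 2 ≤ log (2 / α) := by
    rw [le_log_iff_exp_le (by positivity), le_div_iff₀ hα]
    calc exp (x * t ^ 2 / 2) * α ≤ exp (x * t ^ 2 / 2) * (2 * exp (-(x * t ^ 2 / 2))) := by
          gcongr
      _ = 2 := by rw [mul_left_comm, ← exp_add]; simp
  apply le_sqrt_of_sq_le
  rw [le_div_iff₀ (by positivity)]
  nlinarith [mul_nonneg hx.le (sq_nonneg t)]

theorem stmt2_general (m : ℕ) (hm : 0 < m) (n : ℕ) (hn : n = 2 * m)
    (α : ℝ) (hα0 : 0 < α)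
    (Y z : Fin n → Bool) :
    Ub n m α Y z - Lb n m α Y z ≤ Real.sqrt (32 * Real.log (2 / α) / (n : ℝ)) := by
  subst hn
  set T := neyman (2 * m) m Y z
  set r := √(32 * log (2 / α) / ((2 * m : ℕ) : ℝ))
  have hsub : {t : ℝ | ∃ w, PossibleTable (2 * m) w Y z ∧ α ≤ pval (2 * m) m w Y z
      ∧ sate (2 * m) w = t} ⊆ Metric.closedBall T (r / 2) := by
    rintro _ ⟨w, -, hw, rfl⟩
    have h : 2 * |T - sate (2 * m) w| ≤ r := by
      exact_mod_cast two_mul_le_sqrt_of_le_two_mul_exp hα0 (by positivity)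
        (hw.trans (pval_le hm w Y z))
    rw [Metric.mem_closedBall, Real.dist_eq, abs_sub_comm]
    linarith
  rw [Ub, Lb, ← Real.diam_eq (Metric.isBounded_closedBall.subset hsub)]
  calc _ ≤ Metric.diam (Metric.closedBall T (r / 2)) :=
        Metric.diam_mono hsub Metric.isBounded_closedBall
    _ ≤ 2 * (r / 2) := Metric.diam_closedBall (by positivity)
    _ = r := by ring

/-- In a balanced design (`n = 2m`), the exact confidence interval
has length at most `√(32 log(2/α) / n)`. -/
theorem stmt2 (m : ℕ) (hm : 0 < m) (n : ℕ) (hn : n = 2 * m)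
    (α : ℝ) (hα0 : 0 < α) (hα1 : α < 1)
    (Y z : Fin n → Bool) (hz : z ∈ Assign n m) :
    Ub n m α Y z - Lb n m α Y z ≤ Real.sqrt (32 * Real.log (2 / α) / (n : ℝ)) :=
  stmt2_general m hm n hn α hα0 Y z
end

section
/- Suppose n = 2m. Fix a potential outcome table y, α ∈ (0,1), and an arbitrary (possibly data-dependent) missingness indicator J ∈ {0,1}^n, with partially observed data M ∈ {−1,0,1}^n given by M_i = −J_i + (1−J_i)Y_i. Then P(τ(y) ∈ I°_α(M, Z)) ≥ 1 − α, where the probability is over the uniform random assignment Z and I°_α(M,Z) = [L_α(Y⁽⁻⁾, Z), U_α(Y⁽⁺⁾, Z)] is built from the two extremal imputations of the missing outcomes. No assumption is made on the distribution of J. -/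
open Finset

/-!
Put `deviation w z = ∑ⱼ ±(wⱼ(1) + wⱼ(0))`, with sign `+` on treated units. For `n = 2m` it equals
`n (T(w, z) - τ(w))`, so the p-value of a possible table `w` is the upper-tail frequency of
`|deviation w ·|` at `z`, and the true table `y` is accepted with probability at least `1 - α`.
Whenever it is, some accepted possible table for `Y⁺` has effect at least `τ(y)`. Set the imputed
units of `y` to `(w(0), w(1)) = (0, 1)`. If this makes the deviation at `z` nonnegative, the table
with `w(1) ≠ w(0)` on every unit has deviation `0`, hence p-value `1`, and a larger effect, because
`τ(w) = T(Y, z) - deviation w z / n` for every possible `w`. Otherwise the raised table's deviation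
at `z` shrank in absolute value by exactly the total change of the `wⱼ(1) + wⱼ(0)`, which bounds
how far any other deviation moved, so its p-value dominates that of `y`. The lower endpoint follows
by negating all outcomes.
-/

namespace PotentialOutcomes

variable {n m : ℕ} {α : ℝ}

lemma Assign_nonempty (h : m ≤ n) : (Assign n m).Nonempty := by
  obtain ⟨s, -, hs⟩ := Finset.exists_subset_card_eq (s := (univ : Finset (Fin n))) (by simpa)
  exact ⟨fun i => decide (i ∈ s), by simpa [Assign] using hs⟩

lemma Pr_congr {E E' : (Fin n → Bool) → Prop} (h : ∀ z ∈ Assign n m, E z ↔ E' z) :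
    Pr n m E = Pr n m E' := by
  classical
  unfold Pr
  rw [Finset.filter_congr h]

lemma Pr_mono {E E' : (Fin n → Bool) → Prop} (h : ∀ z ∈ Assign n m, E z → E' z) :
    Pr n m E ≤ Pr n m E' := by
  unfold Pr
  gcongr with z hz
  exact h z hz

lemma Pr_eq_one (hA : (Assign n m).Nonempty) {E : (Fin n → Bool) → Prop}
    (h : ∀ z ∈ Assign n m, E z) : Pr n m E = 1 := by
  classical
  unfold Pr
  rw [Finset.filter_true_of_mem h, div_self (by exact_mod_cast hA.card_pos.ne')]

lemma card_filter_card_filter_lt_le {ι : Type*} (s : Finset ι) (f : ι → ℝ) (hα : 0 ≤ α)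
    [DecidablePred fun z => ((s.filter fun z' => f z ≤ f z').card : ℝ) < α * s.card] :
    ((s.filter fun z => ((s.filter fun z' => f z ≤ f z').card : ℝ) < α * s.card).card : ℝ)
      ≤ α * s.card := by
  set bad := s.filter fun z => ((s.filter fun z' => f z ≤ f z').card : ℝ) < α * s.card
  rcases bad.eq_empty_or_nonempty with hbad | hbad
  · rw [hbad, Finset.card_empty, Nat.cast_zero]
    positivity
  -- the least statistic value among the bad points already has an upper tail containing them all
  obtain ⟨z₀, hz₀, hmin⟩ := bad.exists_min_image f hbad
  have hsub : bad ⊆ s.filter fun z' => f z₀ ≤ f z' := fun z hz =>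
    Finset.mem_filter.2 ⟨(Finset.mem_filter.1 hz).1, hmin z hz⟩
  exact (Nat.cast_le.2 (Finset.card_le_card hsub)).trans (Finset.mem_filter.1 hz₀).2.le

lemma one_sub_le_Pr_le_Pr (hA : (Assign n m).Nonempty) (f : (Fin n → Bool) → ℝ)
    (hα : 0 ≤ α) : 1 - α ≤ Pr n m fun z => α ≤ Pr n m fun z' => f z ≤ f z' := by
  classical
  have hN : (0 : ℝ) < (Assign n m).card := by exact_mod_cast hA.card_pos
  have hsplit := Finset.card_filter_add_card_filter_not (s := Assign n m)
    fun z => α ≤ Pr n m fun z' => f z ≤ f z'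
  have hbad := card_filter_card_filter_lt_le (Assign n m) f hα
  simp only [Pr, le_div_iff₀ hN, not_le] at hbad hsplit ⊢
  have hsplit' := congrArg (Nat.cast (R := ℝ)) hsplit
  push_cast at hsplit'
  linarith

lemma b2r_not (b : Bool) : b2r (!b) = 1 - b2r b := by cases b <;> simp [b2r]

noncomputable def armSign (z : Fin n → Bool) (j : Fin n) : ℝ := if z j then 1 else -1

noncomputable def pairSum (p : Bool × Bool) : ℝ := b2r p.2 + b2r p.1

noncomputable def deviation (n : ℕ) (w : Fin n → Bool × Bool) (z : Fin n → Bool) : ℝ :=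
  ∑ j, armSign z j * pairSum (w j)

lemma sum_armSign {z : Fin n → Bool} (hz : z ∈ Assign n m) :
    ∑ j, armSign z j = 2 * m - n := by
  have hcard : (#{i | z i = true} : ℝ) = m := by exact_mod_cast (Finset.mem_filter.1 hz).2
  have hsign : ∀ j, armSign z j = 2 * (if z j = true then 1 else 0) - 1 := by
    intro j; unfold armSign; split_ifs <;> norm_num
  simp only [hsign, Finset.sum_sub_distrib, ← Finset.mul_sum, Finset.sum_boole, hcard]
  simp

lemma neyman_sub_sate (hn : n = 2 * m) (w : Fin n → Bool × Bool) {z : Fin n → Bool}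
    (hz : z ∈ Assign n m) :
    neyman n m (obsOutcome n w z) z - sate n w = deviation n w z / n := by
  obtain rfl | hm := Nat.eq_zero_or_pos m
  · subst hn
    simp [neyman, sate, deviation]
  have hunit : ∀ j, armSign z j * pairSum (w j)
      = 2 * (if z j then b2r (obsOutcome n w z j) else 0)
        - 2 * (if z j then 0 else b2r (obsOutcome n w z j)) - (b2r (w j).2 - b2r (w j).1) := by
    intro j; unfold armSign pairSum obsOutcome; split_ifs <;> ring
  simp only [deviation, hunit, Finset.sum_sub_distrib, ← Finset.mul_sum, neyman, sate]
  subst hn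
  push_cast
  field_simp
  ring

lemma possibleTable_iff {w : Fin n → Bool × Bool} {Y z : Fin n → Bool} :
    PossibleTable n w Y z ↔ obsOutcome n w z = Y := by
  refine ⟨fun h => funext fun j => ?_, fun h j => ?_⟩
  · cases hz : z j <;> simp [obsOutcome, hz, (h j).1, (h j).2]
  · subst h
    constructor <;> intro hz <;> simp [obsOutcome, hz]

lemma pval_eq (hn : n = 2 * m) {w : Fin n → Bool × Bool} {Y z : Fin n → Bool}
    (hz : z ∈ Assign n m) (hobs : obsOutcome n w z = Y) :
    pval n m w Y z = Pr n m fun z' => |deviation n w z| ≤ |deviation n w z'| := by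
  refine Pr_congr fun z' hz' => ?_
  rw [← hobs, ge_iff_le, neyman_sub_sate hn w hz, neyman_sub_sate hn w hz', abs_div, abs_div]
  rcases Nat.eq_zero_or_pos n with rfl | hn₀
  · simp [deviation]
  · exact div_le_div_iff_of_pos_right (by positivity)

lemma abs_deviation_sub_le (w w' : Fin n → Bool × Bool) (z : Fin n → Bool) :
    |deviation n w' z - deviation n w z| ≤ ∑ j, |pairSum (w' j) - pairSum (w j)| := by
  rw [deviation, deviation, ← Finset.sum_sub_distrib]
  refine (Finset.abs_sum_le_sum_abs _ _).trans (Finset.sum_le_sum fun j _ => ?_)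
  rw [← mul_sub, abs_mul]
  unfold armSign
  split_ifs <;> simp

def negTable (w : Fin n → Bool × Bool) : Fin n → Bool × Bool := fun j => (!(w j).1, !(w j).2)

def unitTable (Y z : Fin n → Bool) : Fin n → Bool × Bool :=
  fun j => if z j then (!Y j, Y j) else (Y j, !Y j)

def raiseTable (y : Fin n → Bool × Bool) (Y z : Fin n → Bool) : Fin n → Bool × Bool :=
  fun j => if Y j = obsOutcome n y z j then y j else (false, true)

lemma obsOutcome_negTable (w : Fin n → Bool × Bool) (z : Fin n → Bool) :
    obsOutcome n (negTable w) z = fun j => !obsOutcome n w z j := by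
  funext j
  cases hz : z j <;> simp [obsOutcome, negTable, hz]

lemma sate_negTable (w : Fin n → Bool × Bool) : sate n (negTable w) = -sate n w := by
  simp only [sate, negTable, b2r_not, ← neg_div, ← Finset.sum_neg_distrib]
  congr 1
  exact Finset.sum_congr rfl fun j _ => by ring

lemma deviation_negTable (hn : n = 2 * m) (w : Fin n → Bool × Bool) {z : Fin n → Bool}
    (hz : z ∈ Assign n m) : deviation n (negTable w) z = -deviation n w z := by
  have hunit : ∀ j, armSign z j * pairSum (negTable w j)
      = 2 * armSign z j - armSign z j * pairSum (w j) := by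
    intro j; simp only [pairSum, negTable, b2r_not]; ring
  simp only [deviation, hunit, Finset.sum_sub_distrib, ← Finset.mul_sum, sum_armSign hz, hn]
  push_cast
  ring

lemma pval_negTable (hn : n = 2 * m) {w : Fin n → Bool × Bool} {Y z : Fin n → Bool}
    (hz : z ∈ Assign n m) (hobs : obsOutcome n w z = Y) :
    pval n m (negTable w) (fun j => !Y j) z = pval n m w Y z := by
  rw [pval_eq hn hz (by rw [obsOutcome_negTable, hobs]), pval_eq hn hz hobs]
  refine Pr_congr fun z' hz' => ?_
  rw [deviation_negTable hn w hz, deviation_negTable hn w hz', abs_neg, abs_neg]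

lemma obsOutcome_unitTable (Y z : Fin n → Bool) : obsOutcome n (unitTable Y z) z = Y := by
  funext j
  cases hz : z j <;> simp [obsOutcome, unitTable, hz]

lemma deviation_unitTable (hn : n = 2 * m) (Y z : Fin n → Bool) {z' : Fin n → Bool}
    (hz' : z' ∈ Assign n m) : deviation n (unitTable Y z) z' = 0 := by
  have hsum : ∀ j, pairSum (unitTable Y z j) = 1 := by
    intro j
    cases hz : z j <;> cases hY : Y j <;> simp [pairSum, unitTable, hz, hY, b2r]
  simp only [deviation, hsum, mul_one, sum_armSign hz', hn]
  push_cast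
  ring

lemma pval_unitTable (hn : n = 2 * m) (Y : Fin n → Bool) {z : Fin n → Bool}
    (hz : z ∈ Assign n m) : pval n m (unitTable Y z) Y z = 1 := by
  rw [pval_eq hn hz (obsOutcome_unitTable Y z)]
  exact Pr_eq_one ⟨z, hz⟩ fun z' hz' => by
    simp [deviation_unitTable hn Y z hz, deviation_unitTable hn Y z hz']

section Imputation

variable {y : Fin n → Bool × Bool} {Y z : Fin n → Bool}

lemma obsOutcome_raiseTable (hY : ∀ j, Y j = obsOutcome n y z j ∨ Y j = z j) :
    obsOutcome n (raiseTable y Y z) z = Y := by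
  funext j
  by_cases hj : Y j = obsOutcome n y z j
  · simp [raiseTable, hj, obsOutcome]
  · rw [obsOutcome, show raiseTable y Y z j = (false, true) from if_neg hj,
      (hY j).resolve_left hj]
    cases z j <;> rfl

lemma sate_le_sate_raiseTable : sate n y ≤ sate n (raiseTable y Y z) := by
  refine div_le_div_of_nonneg_right (Finset.sum_le_sum fun j _ => ?_) (Nat.cast_nonneg n)
  unfold raiseTable
  split_ifs
  · rfl
  · cases (y j).1 <;> cases (y j).2 <;> norm_num [b2r]

lemma deviation_raiseTable (hY : ∀ j, Y j = obsOutcome n y z j ∨ Y j = z j) :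
    deviation n (raiseTable y Y z) z
      = deviation n y z + ∑ j, |pairSum (raiseTable y Y z j) - pairSum (y j)| := by
  rw [deviation, deviation, ← Finset.sum_add_distrib]
  refine Finset.sum_congr rfl fun j _ => ?_
  by_cases hj : Y j = obsOutcome n y z j
  · simp [raiseTable, hj]
  have hYz := (hY j).resolve_left hj
  rw [hYz] at hj
  simp only [raiseTable, if_neg (hYz ▸ hj)]
  revert hj
  unfold armSign pairSum obsOutcome
  cases z j <;> cases (y j).1 <;> cases (y j).2 <;> norm_num [b2r]

lemma pval_le_pval_raiseTable (hn : n = 2 * m) (hz : z ∈ Assign n m)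
    (hY : ∀ j, Y j = obsOutcome n y z j ∨ Y j = z j)
    (hneg : deviation n (raiseTable y Y z) z ≤ 0) :
    pval n m y (obsOutcome n y z) z ≤ pval n m (raiseTable y Y z) Y z := by
  rw [pval_eq hn hz rfl, pval_eq hn hz (obsOutcome_raiseTable hY)]
  refine Pr_mono fun z' _ hz' => ?_
  have hD := deviation_raiseTable hY
  have hD' := abs_deviation_sub_le y (raiseTable y Y z) z'
  have hDnn : 0 ≤ ∑ j, |pairSum (raiseTable y Y z j) - pairSum (y j)| :=
    Finset.sum_nonneg fun j _ => abs_nonneg _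
  have htri := abs_sub_abs_le_abs_sub (deviation n y z') (deviation n (raiseTable y Y z) z')
  rw [abs_sub_comm] at htri
  rw [abs_of_nonpos (by linarith)] at hz'
  rw [abs_of_nonpos hneg]
  linarith


theorem exists_accepted_sate_ge (hn : n = 2 * m) (hα : α ≤ 1)
    (hz : z ∈ Assign n m) (hY : ∀ j, Y j = obsOutcome n y z j ∨ Y j = z j)
    (hy : α ≤ pval n m y (obsOutcome n y z) z) :
    ∃ w, PossibleTable n w Y z ∧ α ≤ pval n m w Y z ∧ sate n y ≤ sate n w := by
  rcases le_total (deviation n (raiseTable y Y z) z) 0 with hneg | hpos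
  · exact ⟨raiseTable y Y z, possibleTable_iff.2 (obsOutcome_raiseTable hY),
      hy.trans (pval_le_pval_raiseTable hn hz hY hneg), sate_le_sate_raiseTable⟩
  refine ⟨unitTable Y z, possibleTable_iff.2 (obsOutcome_unitTable Y z),
    (pval_unitTable hn Y hz).symm ▸ hα, (sate_le_sate_raiseTable (Y := Y) (z := z)).trans ?_⟩
  have hraise := neyman_sub_sate hn (raiseTable y Y z) hz
  have hunit := neyman_sub_sate hn (unitTable Y z) hz
  rw [obsOutcome_raiseTable hY] at hraise
  rw [obsOutcome_unitTable, deviation_unitTable hn Y z hz, zero_div] at hunit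
  have := div_nonneg hpos (Nat.cast_nonneg (α := ℝ) n)
  linarith

theorem exists_accepted_sate_le (hn : n = 2 * m) (hα : α ≤ 1)
    (hz : z ∈ Assign n m) (hY : ∀ j, Y j = obsOutcome n y z j ∨ Y j = !z j)
    (hy : α ≤ pval n m y (obsOutcome n y z) z) :
    ∃ w, PossibleTable n w Y z ∧ α ≤ pval n m w Y z ∧ sate n w ≤ sate n y := by
  have hY' : ∀ j, (!Y j) = obsOutcome n (negTable y) z j ∨ (!Y j) = z j := by
    intro j
    rw [obsOutcome_negTable]
    rcases hY j with h | h <;> simp [h]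
  have hy' : α ≤ pval n m (negTable y) (obsOutcome n (negTable y) z) z := by
    rwa [obsOutcome_negTable, pval_negTable hn hz rfl]
  obtain ⟨w, hw, hwα, hsate⟩ := exists_accepted_sate_ge hn hα hz hY' hy'
  have hobs := possibleTable_iff.1 hw
  have hobs' : obsOutcome n (negTable w) z = Y := by simp [obsOutcome_negTable, hobs]
  refine ⟨negTable w, possibleTable_iff.2 hobs', ?_, ?_⟩
  · have hpval := pval_negTable hn hz hobs
    simp only [Bool.not_not] at hpval
    rwa [hpval]
  · rw [sate_negTable] at hsate ⊢
    linarith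

lemma sate_le_Ub {w : Fin n → Bool × Bool} (hw : PossibleTable n w Y z)
    (hwα : α ≤ pval n m w Y z) : sate n w ≤ Ub n m α Y z :=
  le_csSup ((Set.finite_range (sate n)).subset <| by
    rintro _ ⟨w, -, -, rfl⟩; exact ⟨w, rfl⟩).bddAbove ⟨w, hw, hwα, rfl⟩

lemma Lb_le_sate {w : Fin n → Bool × Bool} (hw : PossibleTable n w Y z)
    (hwα : α ≤ pval n m w Y z) : Lb n m α Y z ≤ sate n w :=
  csInf_le ((Set.finite_range (sate n)).subset <| by
    rintro _ ⟨w, -, -, rfl⟩; exact ⟨w, rfl⟩).bddBelow ⟨w, hw, hwα, rfl⟩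

theorem Lb_le_sate_of_imputation (hn : n = 2 * m) (hα : α ≤ 1)
    (hz : z ∈ Assign n m) (hY : ∀ j, Y j = obsOutcome n y z j ∨ Y j = !z j)
    (hy : α ≤ pval n m y (obsOutcome n y z) z) : Lb n m α Y z ≤ sate n y :=
  have ⟨_, hw, hwα, hsate⟩ := exists_accepted_sate_le hn hα hz hY hy
  (Lb_le_sate hw hwα).trans hsate

theorem sate_le_Ub_of_imputation (hn : n = 2 * m) (hα : α ≤ 1)
    (hz : z ∈ Assign n m) (hY : ∀ j, Y j = obsOutcome n y z j ∨ Y j = z j)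
    (hy : α ≤ pval n m y (obsOutcome n y z) z) : sate n y ≤ Ub n m α Y z :=
  have ⟨_, hw, hwα, hsate⟩ := exists_accepted_sate_ge hn hα hz hY hy
  hsate.trans (sate_le_Ub hw hwα)

end Imputation

lemma one_sub_le_Pr_le_pval (hn : n = 2 * m) (y : Fin n → Bool × Bool) (hα : 0 ≤ α) :
    1 - α ≤ Pr n m fun z => α ≤ pval n m y (obsOutcome n y z) z := by
  refine (one_sub_le_Pr_le_Pr (Assign_nonempty (by omega)) (fun z => |deviation n y z|) hα).trans
    (Pr_mono fun z hz h => ?_)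
  rwa [pval_eq hn hz rfl]

end PotentialOutcomes

open PotentialOutcomes in
theorem stmt4_general (m : ℕ) (n : ℕ) (hn : n = 2 * m)
    (y : Fin n → Bool × Bool) (α : ℝ) (hα0 : 0 < α) (hα1 : α < 1)
    (J : (Fin n → Bool) → Fin n → Bool) :
    1 - α ≤ Pr n m fun z =>
      Lb n m α (fun i => if J z i then !(z i) else obsOutcome n y z i) z ≤ sate n y ∧
        sate n y ≤ Ub n m α (fun i => if J z i then z i else obsOutcome n y z i) z := by
  refine (one_sub_le_Pr_le_pval hn y hα0.le).trans (Pr_mono fun z hz hy => ⟨?_, ?_⟩)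
  · exact Lb_le_sate_of_imputation hn hα1.le hz (fun j => by by_cases h : J z j <;> simp [h]) hy
  · exact sate_le_Ub_of_imputation hn hα1.le hz (fun j => by by_cases h : J z j <;> simp [h]) hy

/-- Missing data: for a balanced design, an arbitrary (possibly
data-dependent) missingness mechanism `J`, and the interval
`I°_α(M, Z) = [L_α(Y⁻, Z), U_α(Y⁺, Z)]` built from the two extremal imputations
`Y⁺` (`Y⁺ᵢ = Zᵢ` if `Jᵢ = 1`, else `Yᵢ`) and `Y⁻` (`Y⁻ᵢ = 1 − Zᵢ` if `Jᵢ = 1`, else `Yᵢ`),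
we have `P(τ(y) ∈ I°_α(M, Z)) ≥ 1 − α`. -/
theorem stmt4 (m : ℕ) (hm : 0 < m) (n : ℕ) (hn : n = 2 * m)
    (y : Fin n → Bool × Bool) (α : ℝ) (hα0 : 0 < α) (hα1 : α < 1)
    (J : (Fin n → Bool) → Fin n → Bool) :
    1 - α ≤ Pr n m fun z =>
      Lb n m α (fun i => if J z i then !(z i) else obsOutcome n y z i) z ≤ sate n y ∧
        sate n y ≤ Ub n m α (fun i => if J z i then z i else obsOutcome n y z i) z :=
  stmt4_general m n hn y α hα0 hα1 J
end

section
/- Suppose n = 2m. For any potential outcome table w, the probability mass function of the Neyman estimator T(w, Z), where Z is the uniform random assignment into two equal groups, is symmetric about its expectation E[T(w,Z)] = τ(w): for every j in the lattice m^{-1}ℤ such that τ(w) + j lies in the support lattice, P(T(w,Z) = τ(w) − j) = P(T(w,Z) = τ(w) + j). -/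
open Finset

/-! Swapping treatment and control is a bijection of the balanced design that sends `T` to
`2 τ(w) - T`, so `T - τ(w)` and `τ(w) - T` have the same distribution. -/

open Function

lemma Pr_comp_of_involutive {n m : ℕ} {f : (Fin n → Bool) → Fin n → Bool} (hf : Involutive f)
    (hA : ∀ z ∈ Assign n m, f z ∈ Assign n m) (E : (Fin n → Bool) → Prop) :
    Pr n m (E ∘ f) = Pr n m E := by
  classical
  unfold Pr
  congr 1
  norm_cast
  refine card_nbij' f f ?_ ?_ (fun z _ => hf z) (fun z _ => hf z)
  · intro z hz
    simp only [coe_filter, Set.mem_ofPred_eq, comp_apply] at hz ⊢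
    exact ⟨hA z hz.1, hz.2⟩
  · intro z hz
    simp only [coe_filter, Set.mem_ofPred_eq, comp_apply] at hz ⊢
    exact ⟨hA z hz.1, by rw [hf z]; exact hz.2⟩

lemma not_comp_mem_Assign {m : ℕ} {z : Fin (2 * m) → Bool} (hz : z ∈ Assign (2 * m) m) :
    (!z ·) ∈ Assign (2 * m) m := by
  simp only [Assign, mem_filter, mem_univ, true_and] at hz ⊢
  have hcompl : (univ.filter fun i => (!z i) = true) = (univ.filter fun i => z i = true)ᶜ := by
    ext i; simp
  rw [hcompl, card_compl, hz, Fintype.card_fin]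
  omega

-- The arms have equal size, so swapping them turns each arm's observed total into the
-- complementary potential-outcome total.
lemma neyman_obsOutcome_not {m : ℕ} (hm : m ≠ 0) (w : Fin (2 * m) → Bool × Bool)
    (z : Fin (2 * m) → Bool) :
    neyman (2 * m) m (obsOutcome _ w (!z ·)) (!z ·) =
      2 * sate (2 * m) w - neyman (2 * m) m (obsOutcome _ w z) z := by
  have htreated : (∑ i, if !z i then b2r (obsOutcome _ w (!z ·) i) else 0) =
      ∑ i, b2r (w i).2 - ∑ i, if z i then b2r (obsOutcome _ w z i) else 0 := by
    rw [← sum_sub_distrib]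
    congr! 1 with i
    cases hzi : z i <;> simp [obsOutcome, hzi]
  have hcontrol : (∑ i, if !z i then 0 else b2r (obsOutcome _ w (!z ·) i)) =
      ∑ i, b2r (w i).1 - ∑ i, if z i then 0 else b2r (obsOutcome _ w z i) := by
    rw [← sum_sub_distrib]
    congr! 1 with i
    cases hzi : z i <;> simp [obsOutcome, hzi]
  simp only [neyman, sate, htreated, hcontrol, sum_sub_distrib]
  have hm' : (m : ℝ) ≠ 0 := Nat.cast_ne_zero.mpr hm
  push_cast
  field_simp
  ring

theorem stmt5_general (m : ℕ) (hm : 0 < m) (n : ℕ) (hn : n = 2 * m)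
    (w : Fin n → Bool × Bool) (j : ℝ) :
    Pr n m (fun z => neyman n m (obsOutcome n w z) z = sate n w - j) =
      Pr n m (fun z => neyman n m (obsOutcome n w z) z = sate n w + j) := by
  subst hn
  rw [← Pr_comp_of_involutive (f := fun z i => !z i) (fun z => by simp)
    (fun z => not_comp_mem_Assign)]
  congr 1
  ext z
  simp only [comp_apply, neyman_obsOutcome_not hm.ne']
  constructor <;> intro h <;> linarith

/-- In a balanced design, the pmf of the Neyman estimator `T(w, Z)` is
symmetric about its expectation `τ(w)`: for every `j` such that `τ(w) + j` lies in the
support lattice `m⁻¹ℤ`, we have `P(T(w,Z) = τ(w) − j) = P(T(w,Z) = τ(w) + j)`. -/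
theorem stmt5 (m : ℕ) (hm : 0 < m) (n : ℕ) (hn : n = 2 * m)
    (w : Fin n → Bool × Bool) (j : ℝ) (hj : sate n w + j ∈ lattZ m) :
    Pr n m (fun z => neyman n m (obsOutcome n w z) z = sate n w - j) =
      Pr n m (fun z => neyman n m (obsOutcome n w z) z = sate n w + j) :=
  stmt5_general m hm n hn w j
end

section
/- Let n = 2m for some m ∈ ℤ_{>0}, and fix observed data (Y, Z). Then there exists a potential outcome table w that is possible given (Y, Z) and satisfies τ(w) = T(Y, Z); concretely, a table with count vector (0, n₁₁ + n₀₀, n₁₀ + n₀₁, 0) works. -/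
open Finset

/-!
Flip every unobserved potential outcome: treated units get control outcome `!Y j`, control
units get treatment outcome `!Y j`. A treated unit then contributes `2 Y j - 1` to `n τ(w)` and a
control unit `1 - 2 Y j`, so `n τ(w) = 2 (∑_treated Y - ∑_control Y) + (#controls - #treated)`.
When `n = 2m` the last term vanishes and the first is `n T(Y, Z)`.
-/

def flipTable (n : ℕ) (Y z : Fin n → Bool) : Fin n → Bool × Bool :=
  fun j => if z j then (!Y j, Y j) else (Y j, !Y j)

section flipTable

variable {n : ℕ} (Y z : Fin n → Bool)

theorem possibleTable_flipTable : PossibleTable n (flipTable n Y z) Y z := by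
  intro j
  cases h : z j <;> simp [flipTable, h]

theorem sum_ite_neg_one_one :
    (∑ j, if z j then (-1 : ℝ) else 1) =
      #{j | z j = false} - #{j | z j = true} := by
  rw [sum_ite, sum_const, sum_const]
  simp [sub_eq_neg_add]

theorem sum_effect_flipTable :
    ∑ j, (b2r (flipTable n Y z j).2 - b2r (flipTable n Y z j).1) =
      2 * ((∑ j, if z j then b2r (Y j) else 0) - ∑ j, if z j then 0 else b2r (Y j)) +
        (#{j | z j = false} - #{j | z j = true}) := by
  rw [← sum_ite_neg_one_one, ← sum_sub_distrib, mul_sum, ← sum_add_distrib]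
  refine sum_congr rfl fun j _ => ?_
  unfold flipTable
  cases z j <;> cases Y j <;> norm_num [b2r]

theorem vcount_flipTable_true_true : vcount n (flipTable n Y z) true true = 0 := by
  refine card_eq_zero.2 (filter_eq_empty_iff.2 fun j _ => ?_)
  unfold flipTable
  cases z j <;> cases Y j <;> simp

theorem vcount_flipTable_false_false : vcount n (flipTable n Y z) false false = 0 := by
  refine card_eq_zero.2 (filter_eq_empty_iff.2 fun j _ => ?_)
  unfold flipTable
  cases z j <;> cases Y j <;> simp

theorem vcount_flipTable_true_false :
    vcount n (flipTable n Y z) true false = ncount n Y z true true + ncount n Y z false false := by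
  simp only [vcount, ncount, card_filter, ← sum_add_distrib]
  refine sum_congr rfl fun j _ => ?_
  unfold flipTable
  cases z j <;> cases Y j <;> rfl

theorem vcount_flipTable_false_true :
    vcount n (flipTable n Y z) false true = ncount n Y z true false + ncount n Y z false true := by
  simp only [vcount, ncount, card_filter, ← sum_add_distrib]
  refine sum_congr rfl fun j _ => ?_
  unfold flipTable
  cases z j <;> cases Y j <;> rfl

theorem sate_flipTable_of_balanced {m : ℕ} (hn : n = 2 * m) (hz : z ∈ Assign n m) :
    sate n (flipTable n Y z) = neyman n m Y z := by
  have htreated : #{j | z j = true} = m := (mem_filter.1 hz).2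
  have hcontrol : #{j | z j = false} = m := by
    have := card_filter_add_card_filter_not (s := univ) fun j => z j = true
    simp only [Bool.not_eq_true, card_univ, Fintype.card_fin] at this
    omega
  have hnR : (n : ℝ) = 2 * m := by exact_mod_cast hn
  rw [sate, neyman, sum_effect_flipTable, htreated, hcontrol, sub_self, add_zero, hnR,
    mul_div_mul_left _ _ two_ne_zero, sub_div, two_mul, add_sub_cancel_right]

end flipTable

theorem stmt6_general (m : ℕ) (n : ℕ) (hn : n = 2 * m)
    (Y z : Fin n → Bool) (hz : z ∈ Assign n m) :
    ∃ w : Fin n → Bool × Bool, PossibleTable n w Y z ∧ sate n w = neyman n m Y z ∧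
      vcount n w true true = 0 ∧
      vcount n w true false = ncount n Y z true true + ncount n Y z false false ∧
      vcount n w false true = ncount n Y z true false + ncount n Y z false true ∧
      vcount n w false false = 0 :=
  ⟨flipTable n Y z, possibleTable_flipTable Y z, sate_flipTable_of_balanced Y z hn hz,
    vcount_flipTable_true_true Y z, vcount_flipTable_true_false Y z,
    vcount_flipTable_false_true Y z, vcount_flipTable_false_false Y z⟩

/-- In a balanced design, for any observed data `(Y, Z)` there exists a
potential outcome table `w` that is possible given `(Y, Z)` with `τ(w) = T(Y, Z)`;
concretely, one with count vector `(0, n₁₁ + n₀₀, n₁₀ + n₀₁, 0)`. -/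
theorem stmt6 (m : ℕ) (hm : 0 < m) (n : ℕ) (hn : n = 2 * m)
    (Y z : Fin n → Bool) (hz : z ∈ Assign n m) :
    ∃ w : Fin n → Bool × Bool, PossibleTable n w Y z ∧ sate n w = neyman n m Y z ∧
      vcount n w true true = 0 ∧
      vcount n w true false = ncount n Y z true true + ncount n Y z false false ∧
      vcount n w false true = ncount n Y z true false + ncount n Y z false true ∧
      vcount n w false false = 0 :=
  stmt6_general m n hn Y z hz
end

section
/- Fix j, v₁₀ ∈ ℤ_{≥0}, τ₀ with nτ₀ ∈ ℤ, and consider the count vector v = (j − v₁₀, v₁₀, v₁₀ − nτ₀, n − j − v₁₀ + nτ₀). Given an observed count vector n⃗ = (n₁₁, n₁₀, n₀₁, n₀₀), a necessary condition for v to be possible is that j ≥ nτ₀ + n₀₁, j ≥ n₁₁, n ≥ j + n₁₀, and n₁₁ + nτ₀ + n₁₀ + n₀₁ ≥ j all hold; and in that case the set of values v₁₀ for which v is possible is exactly the (possibly empty) integer interval max(0, nτ₀, j − n₁₁ − n₀₁, n₁₁ + n₀₁ + nτ₀ − j) ≤ v₁₀ ≤ min(j, n₁₁ + n₀₀, n₁₀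 + n₀₁ + nτ₀, n + nτ₀ − j). -/
open Finset

/-- The (integer) count vector `(a, b, c, d)` is possible given the observed data
`(Y, z)`: some table that is possible given `(Y, z)` has these counts. -/
def PossibleCV (n : ℕ) (Y z : Fin n → Bool) (a b c d : ℤ) : Prop :=
  ∃ w : Fin n → Bool × Bool, PossibleTable n w Y z ∧
    (vcount n w true true : ℤ) = a ∧ (vcount n w true false : ℤ) = b ∧
    (vcount n w false true : ℤ) = c ∧ (vcount n w false false : ℤ) = d

lemma filter_split {n : ℕ} (P Q : Fin n → Prop) [DecidablePred P] [DecidablePred Q] :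
    (univ.filter P).card =
      (univ.filter fun i => P i ∧ Q i).card + (univ.filter fun i => P i ∧ ¬ Q i).card := by
  rw [← Finset.filter_filter, ← Finset.filter_filter,
    Finset.card_filter_add_card_filter_not]

lemma vcount_split (n : ℕ) (Y z : Fin n → Bool) (w : Fin n → Bool × Bool)
    (ht : PossibleTable n w Y z) (u v : Bool) :
    vcount n w u v =
      (univ.filter fun i => z i = true ∧ Y i = u ∧ (w i).1 = v).card +
      (univ.filter fun i => z i = false ∧ Y i = v ∧ (w i).2 = u).card := by
  rw [vcount, filter_split (fun i => (w i).2 = u ∧ (w i).1 = v) (fun i => z i = true)]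
  congr 1
  · refine congrArg Finset.card (Finset.filter_congr ?_)
    intro i _
    have h := (ht i).1
    cases hz : z i <;> simp [hz] at h ⊢
    rw [h]; tauto
  · refine congrArg Finset.card (Finset.filter_congr ?_)
    intro i _
    have h := (ht i).2
    cases hz : z i <;> simp [hz] at h ⊢
    rw [h]; tauto

lemma ncount_split (n : ℕ) (Y z : Fin n → Bool) (w : Fin n → Bool × Bool)
    (s t : Bool) :
    ncount n Y z s t =
      (univ.filter fun i => z i = s ∧ Y i = t ∧ (if z i = true then (w i).1 else (w i).2) = true).card +
      (univ.filter fun i => z i = s ∧ Y i = t ∧ (if z i = true then (w i).1 else (w i).2) = false).card := by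
  rw [ncount, filter_split (fun i => z i = s ∧ Y i = t)
    (fun i => (if z i = true then (w i).1 else (w i).2) = true)]
  congr 1 <;>
  · refine congrArg Finset.card ?_
    ext i
    simp [and_assoc, Bool.not_eq_true]

lemma keyCV (n : ℕ) (Y z : Fin n → Bool) (a b c d : ℤ) :
    PossibleCV n Y z a b c d ↔
      ∃ x p q r : ℕ, x ≤ ncount n Y z true true ∧ p ≤ ncount n Y z true false ∧
        q ≤ ncount n Y z false true ∧ r ≤ ncount n Y z false false ∧
        a = (x : ℤ) + q ∧ b = (ncount n Y z true true : ℤ) - x + r ∧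
        c = (p : ℤ) + (ncount n Y z false true : ℤ) - q ∧
        d = (ncount n Y z true false : ℤ) - p + ((ncount n Y z false false : ℤ) - r) := by
  constructor
  · rintro ⟨w, ht, ha, hb, hc, hd⟩
    set x := (univ.filter fun i => z i = true ∧ Y i = true ∧ (w i).1 = true).card with hxd
    set p := (univ.filter fun i => z i = true ∧ Y i = false ∧ (w i).1 = true).card with hpd
    set q := (univ.filter fun i => z i = false ∧ Y i = true ∧ (w i).2 = true).card with hqd
    set r := (univ.filter fun i => z i = false ∧ Y i = false ∧ (w i).2 = true).card with hrd
    have hv11 := vcount_split n Y z w ht true true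
    have hv10 := vcount_split n Y z w ht true false
    have hv01 := vcount_split n Y z w ht false true
    have hv00 := vcount_split n Y z w ht false false
    have hn11 := ncount_split n Y z w true true
    have hn10 := ncount_split n Y z w true false
    have hn01 := ncount_split n Y z w false true
    have hn00 := ncount_split n Y z w false false
    -- rewrite the if inside ncount_split filters: on z i = s they reduce
    have hredT : ∀ (t b : Bool),
        (univ.filter fun i => z i = true ∧ Y i = t ∧ (if z i = true then (w i).1 else (w i).2) = b).card =
        (univ.filter fun i => z i = true ∧ Y i = t ∧ (w i).1 = b).card := by
      intro t b
      refine congrArg Finset.card (Finset.filter_congr ?_)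
      intro i _
      constructor
      · rintro ⟨h1, h2, h3⟩; rw [if_pos h1] at h3; exact ⟨h1, h2, h3⟩
      · rintro ⟨h1, h2, h3⟩; exact ⟨h1, h2, by rw [if_pos h1]; exact h3⟩
    have hredF : ∀ (t b : Bool),
        (univ.filter fun i => z i = false ∧ Y i = t ∧ (if z i = true then (w i).1 else (w i).2) = b).card =
        (univ.filter fun i => z i = false ∧ Y i = t ∧ (w i).2 = b).card := by
      intro t b
      refine congrArg Finset.card (Finset.filter_congr ?_)
      intro i _
      have : ∀ h1 : z i = false, (if z i = true then (w i).1 else (w i).2) = (w i).2 := by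
        intro h1; rw [if_neg (by simp [h1])]
      constructor
      · rintro ⟨h1, h2, h3⟩; rw [this h1] at h3; exact ⟨h1, h2, h3⟩
      · rintro ⟨h1, h2, h3⟩; exact ⟨h1, h2, by rw [this h1]; exact h3⟩
    rw [hredT, hredT] at hn11 hn10
    rw [hredF, hredF] at hn01 hn00
    refine ⟨x, p, q, r, ?_, ?_, ?_, ?_, ?_, ?_, ?_, ?_⟩ <;> omega
  · rintro ⟨x, p, q, r, hx, hp, hq, hr, ha, hb, hc, hd⟩
    obtain ⟨A, hAs, hAc⟩ := Finset.exists_subset_card_eq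
      (hx : x ≤ (univ.filter fun i => z i = true ∧ Y i = true).card)
    obtain ⟨P, hPs, hPc⟩ := Finset.exists_subset_card_eq
      (hp : p ≤ (univ.filter fun i => z i = true ∧ Y i = false).card)
    obtain ⟨Q, hQs, hQc⟩ := Finset.exists_subset_card_eq
      (hq : q ≤ (univ.filter fun i => z i = false ∧ Y i = true).card)
    obtain ⟨R, hRs, hRc⟩ := Finset.exists_subset_card_eq
      (hr : r ≤ (univ.filter fun i => z i = false ∧ Y i = false).card)
    set B : Finset (Fin n) := A ∪ P ∪ Q ∪ R with hB
    set w : Fin n → Bool × Bool := fun i =>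
      if z i = true then (decide (i ∈ B), Y i) else (Y i, decide (i ∈ B)) with hw
    have hA : ∀ i ∈ A, z i = true ∧ Y i = true := fun i hi => (mem_filter.1 (hAs hi)).2
    have hP : ∀ i ∈ P, z i = true ∧ Y i = false := fun i hi => (mem_filter.1 (hPs hi)).2
    have hQ : ∀ i ∈ Q, z i = false ∧ Y i = true := fun i hi => (mem_filter.1 (hQs hi)).2
    have hR : ∀ i ∈ R, z i = false ∧ Y i = false := fun i hi => (mem_filter.1 (hRs hi)).2
    have hmem : ∀ i, i ∈ B ↔ (i ∈ A ∨ i ∈ P ∨ i ∈ Q ∨ i ∈ R) := by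
      intro i; simp [hB, Finset.mem_union, or_assoc]
    have ht : PossibleTable n w Y z := by
      intro i
      constructor <;> intro h <;> simp [hw, h]
    have key : ∀ i (u v : Bool), ((w i).2 = u ∧ (w i).1 = v) ↔
        (if z i = true then (Y i = u ∧ (decide (i ∈ B)) = v) else ((decide (i ∈ B)) = u ∧ Y i = v)) := by
      intro i u v
      by_cases h : z i = true <;> simp [hw, h]
    have tac : ∀ i, i ∈ A → z i = true ∧ Y i = true := hA
    have e11 : (univ.filter fun i => (w i).2 = true ∧ (w i).1 = true) = A ∪ Q := by
      ext i
      have h1 := hA i; have h2 := hP i; have h3 := hQ i; have h4 := hR i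
      simp only [mem_filter, mem_univ, true_and, Finset.mem_union, key i, hmem i]
      cases hz : z i <;> cases hY : Y i <;>
        simp [hz, hY] at h1 h2 h3 h4 ⊢ <;> tauto
    have e10 : (univ.filter fun i => (w i).2 = true ∧ (w i).1 = false) =
        ((univ.filter fun i => z i = true ∧ Y i = true) \ A) ∪ R := by
      ext i
      have h1 := hA i; have h2 := hP i; have h3 := hQ i; have h4 := hR i
      simp only [mem_filter, mem_univ, true_and, Finset.mem_union, Finset.mem_sdiff,
        key i, hmem i]
      cases hz : z i <;> cases hY : Y i <;>
        simp [hz, hY] at h1 h2 h3 h4 ⊢ <;> tauto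
    have e01 : (univ.filter fun i => (w i).2 = false ∧ (w i).1 = true) =
        P ∪ ((univ.filter fun i => z i = false ∧ Y i = true) \ Q) := by
      ext i
      have h1 := hA i; have h2 := hP i; have h3 := hQ i; have h4 := hR i
      simp only [mem_filter, mem_univ, true_and, Finset.mem_union, Finset.mem_sdiff,
        key i, hmem i]
      cases hz : z i <;> cases hY : Y i <;>
        simp [hz, hY] at h1 h2 h3 h4 ⊢ <;> tauto
    have e00 : (univ.filter fun i => (w i).2 = false ∧ (w i).1 = false) =
        ((univ.filter fun i => z i = true ∧ Y i = false) \ P) ∪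
        ((univ.filter fun i => z i = false ∧ Y i = false) \ R) := by
      ext i
      have h1 := hA i; have h2 := hP i; have h3 := hQ i; have h4 := hR i
      simp only [mem_filter, mem_univ, true_and, Finset.mem_union, Finset.mem_sdiff,
        key i, hmem i]
      cases hz : z i <;> cases hY : Y i <;>
        simp [hz, hY] at h1 h2 h3 h4 ⊢ <;> tauto
    have dAQ : Disjoint A Q := by
      rw [Finset.disjoint_left]; intro i hiA hiQ
      have h1 := (hA i hiA).1; have h2 := (hQ i hiQ).1; simp [h1] at h2
    have dSR : Disjoint ((univ.filter fun i => z i = true ∧ Y i = true) \ A) R := by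
      rw [Finset.disjoint_left]; intro i hi hiR
      have h1 := (mem_filter.1 (Finset.mem_sdiff.1 hi).1).2.1
      have h2 := (hR i hiR).1; simp [h1] at h2
    have dPS : Disjoint P ((univ.filter fun i => z i = false ∧ Y i = true) \ Q) := by
      rw [Finset.disjoint_left]; intro i hiP hi
      have h1 := (mem_filter.1 (Finset.mem_sdiff.1 hi).1).2.1
      have h2 := (hP i hiP).1; simp [h2] at h1
    have dSS : Disjoint ((univ.filter fun i => z i = true ∧ Y i = false) \ P)
        ((univ.filter fun i => z i = false ∧ Y i = false) \ R) := by
      rw [Finset.disjoint_left]; intro i hi hi'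
      have h1 := (mem_filter.1 (Finset.mem_sdiff.1 hi).1).2.1
      have h2 := (mem_filter.1 (Finset.mem_sdiff.1 hi').1).2.1; simp [h1] at h2
    have hv11 : vcount n w true true = x + q := by
      rw [vcount, e11, Finset.card_union_of_disjoint dAQ, hAc, hQc]
    have hv10 : vcount n w true false = (ncount n Y z true true - x) + r := by
      rw [vcount, e10, Finset.card_union_of_disjoint dSR, Finset.card_sdiff_of_subset hAs, hAc, hRc]
      rfl
    have hv01 : vcount n w false true = p + (ncount n Y z false true - q) := by
      rw [vcount, e01, Finset.card_union_of_disjoint dPS, Finset.card_sdiff_of_subset hQs, hPc, hQc]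
      rfl
    have hv00 : vcount n w false false =
        (ncount n Y z true false - p) + (ncount n Y z false false - r) := by
      rw [vcount, e00, Finset.card_union_of_disjoint dSS, Finset.card_sdiff_of_subset hPs,
        Finset.card_sdiff_of_subset hRs, hPc, hRc]
      rfl
    exact ⟨w, ht, by omega, by omega, by omega, by omega⟩

lemma ncount_sum (n : ℕ) (Y z : Fin n → Bool) :
    ncount n Y z true true + ncount n Y z true false + ncount n Y z false true +
      ncount n Y z false false = n := by
  have h : (univ.filter fun i : Fin n => z i = true).card +
      (univ.filter fun i : Fin n => ¬ z i = true).card = n := by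
    rw [Finset.card_filter_add_card_filter_not, card_univ, Fintype.card_fin]
  have h1 := filter_split (fun i : Fin n => z i = true) (fun i => Y i = true)
  have h2 := filter_split (fun i : Fin n => z i = false) (fun i => Y i = true)
  have h3 : (univ.filter fun i : Fin n => ¬ z i = true).card =
      (univ.filter fun i : Fin n => z i = false).card := by
    refine congrArg Finset.card ?_; ext i; simp
  have e1 : ncount n Y z true true = (univ.filter fun i : Fin n => z i = true ∧ Y i = true).card := rfl
  have e2 : ncount n Y z true false = (univ.filter fun i : Fin n => z i = true ∧ ¬ Y i = true).card := by
    refine congrArg Finset.card ?_; ext i; simp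
  have e3 : ncount n Y z false true = (univ.filter fun i : Fin n => z i = false ∧ Y i = true).card := rfl
  have e4 : ncount n Y z false false = (univ.filter fun i : Fin n => z i = false ∧ ¬ Y i = true).card := by
    refine congrArg Finset.card ?_; ext i; simp
  omega


/-- For the one-parameter family
`v = (j − v₁₀, v₁₀, v₁₀ − nτ₀, n − j − v₁₀ + nτ₀)` (here `t = nτ₀ ∈ ℤ`):
a necessary condition for `v` to be possible given `n⃗` is
`j ≥ nτ₀ + n₀₁`, `j ≥ n₁₁`, `n ≥ j + n₁₀`, and `n₁₁ + nτ₀ + n₁₀ + n₀₁ ≥ j`;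
and when these hold, the possible values of `v₁₀` are exactly the integer interval
`max(0, nτ₀, j − n₁₁ − n₀₁, n₁₁ + n₀₁ + nτ₀ − j) ≤ v₁₀
  ≤ min(j, n₁₁ + n₀₀, n₁₀ + n₀₁ + nτ₀, n + nτ₀ − j)`. -/
theorem stmt8 (n m : ℕ) (hm : 0 < m) (hmn : m < n)
    (Y z : Fin n → Bool) (hz : z ∈ Assign n m) (j : ℕ) (t : ℤ) :
    (∀ v10 : ℕ,
        PossibleCV n Y z ((j : ℤ) - v10) (v10 : ℤ) ((v10 : ℤ) - t)
            ((n : ℤ) - j - v10 + t) →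
          (t + (ncount n Y z false true : ℤ) ≤ (j : ℤ) ∧
            (ncount n Y z true true : ℤ) ≤ (j : ℤ) ∧
            (j : ℤ) + (ncount n Y z true false : ℤ) ≤ (n : ℤ) ∧
            (j : ℤ) ≤ (ncount n Y z true true : ℤ) + t +
              (ncount n Y z true false : ℤ) + (ncount n Y z false true : ℤ))) ∧
      ((t + (ncount n Y z false true : ℤ) ≤ (j : ℤ) ∧
          (ncount n Y z true true : ℤ) ≤ (j : ℤ) ∧
          (j : ℤ) + (ncount n Y z true false : ℤ) ≤ (n : ℤ) ∧
          (j : ℤ) ≤ (ncount n Y z true true : ℤ) + t +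
            (ncount n Y z true false : ℤ) + (ncount n Y z false true : ℤ)) →
        ∀ v10 : ℕ,
          PossibleCV n Y z ((j : ℤ) - v10) (v10 : ℤ) ((v10 : ℤ) - t)
              ((n : ℤ) - j - v10 + t) ↔
            (max (max 0 t)
                (max ((j : ℤ) - (ncount n Y z true true : ℤ) -
                    (ncount n Y z false true : ℤ))
                  ((ncount n Y z true true : ℤ) + (ncount n Y z false true : ℤ) +
                    t - (j : ℤ))) ≤ (v10 : ℤ) ∧
              (v10 : ℤ) ≤
                min (min (j : ℤ)
                    ((ncount n Y z true true : ℤ) + (ncount n Y z false false : ℤ)))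
                  (min ((ncount n Y z true false : ℤ) +
                      (ncount n Y z false true : ℤ) + t)
                    ((n : ℤ) + t - (j : ℤ))))) := by
  
  have hsum := ncount_sum n Y z
  constructor
  · intro v10 hcv
    rw [keyCV] at hcv
    obtain ⟨x, p, q, r, hx, hp, hq, hr, ha, hb, hc, hd⟩ := hcv
    omega
  · rintro ⟨H1, H2, H3, H4⟩ v10
    rw [keyCV]
    constructor
    · rintro ⟨x, p, q, r, hx, hp, hq, hr, ha, hb, hc, hd⟩
      omega
    · rintro ⟨hlo, hhi⟩
      set N11 := (ncount n Y z true true : ℤ)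
      set N10 := (ncount n Y z true false : ℤ)
      set N01 := (ncount n Y z false true : ℤ)
      set N00 := (ncount n Y z false false : ℤ)
      set aZ : ℤ := (j : ℤ) - v10
      set xZ : ℤ := max (max 0 (aZ - N01)) (max (N11 - (v10 : ℤ)) (aZ + ((v10:ℤ) - t) - N01 - N10))
      refine ⟨xZ.toNat, (aZ + ((v10:ℤ) - t) - N01 - xZ).toNat, (aZ - xZ).toNat,
        ((v10 : ℤ) - N11 + xZ).toNat, ?_, ?_, ?_, ?_, ?_, ?_, ?_, ?_⟩ <;> omega
end

section
/- Suppose n = 2m. Fix an observed count vector n⃗ and a count vector v = (v₁₁, v₁₀, v₀₁, v₀₀) with min(v₁₀, v₀₁) ≥ 1, and define v' = (v₁₁+1, v₁₀−1, v₀₁−1, v₀₀+1) and v° = (v₁₁, v₁₀−1, v₀₁−1, v₀₀). If the probability mass function of T(v°, Z'), where Z' is uniform on Z(n−2), is symmetric–decreasing on the lattice (m−1)^{-1}ℤ, then p(v', n⃗) ≥ p(v, n⃗). -/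
open Finset

/-!
With `n = 2m` the Neyman estimator is `S / m`, where `S` is the number of treated successes minus
the number of control successes, and `τ = d / n` with `d = v₁₀ - v₀₁`; so `|T - τ| ≥ c` reads
`r ≤ |2S - d|` with `r = ⌈n c⌉`. The p-value depends only on the count vector, so `v` and `v'` may
be realised by tables that share a table `v°` on `n - 2` units and differ only in two extra units:
a `(1,0)` and a `(0,1)` unit for `v`, a `(1,1)` and a `(0,0)` unit for `v'`. Assignments treating
both or neither of the two units give the same `S` for both tables. On those treating exactly one
of them, `S` equals `S°` for `v` and `S° ± 1` for `v'`, where `S°` is the statistic of `v°` under a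
uniform assignment with `m - 1` treated. As the law of `S°` is symmetric–decreasing about `d / 2`,
the window `|2S° - d| < r` carries at least the mass of each of its translates, so shifting by
`±1` can only increase the tail probability.
-/

theorem Finset.sum_le_sum_of_card_eq {ι M : Type*} [DecidableEq ι] [AddCommMonoid M]
    [LinearOrder M] [IsOrderedAddMonoid M] {s t : Finset ι} (g : ι → M) (hst : #s = #t)
    (hg : ∀ a ∈ s, a ∉ t → ∀ b ∈ t, g a ≤ g b) :
    ∑ i ∈ s, g i ≤ ∑ i ∈ t, g i := by
  have hcard : #(s \ t) = #(t \ s) := by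
    have hs := card_sdiff_add_card_inter s t
    have ht := card_sdiff_add_card_inter t s
    rw [inter_comm] at ht
    omega
  have hdiff : ∑ i ∈ s \ t, g i ≤ ∑ i ∈ t \ s, g i := by
    rcases (s \ t).eq_empty_or_nonempty with h | h
    · rw [h, card_empty, eq_comm, card_eq_zero] at hcard
      simp [h, hcard]
    obtain ⟨a, ha, hmax⟩ := exists_max_image _ g h
    rw [mem_sdiff] at ha
    calc ∑ i ∈ s \ t, g i ≤ #(s \ t) • g a := sum_le_card_nsmul _ _ _ hmax
      _ = #(t \ s) • g a := by rw [hcard]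
      _ ≤ ∑ i ∈ t \ s, g i :=
        card_nsmul_le_sum _ _ _ fun b hb => hg a ha.1 ha.2 b (mem_sdiff.mp hb).1
  rw [← sum_inter_add_sum_sdiff s t, ← sum_inter_add_sum_sdiff t s, inter_comm]
  exact add_le_add_right hdiff _

/-- The value counts of `f` on `A` are symmetric–decreasing about `d / 2`. -/
def FiberSD {β : Type*} (A : Finset β) (f : β → ℤ) (d : ℤ) : Prop :=
  ∀ p q : ℤ, |2 * p - d| ≤ |2 * q - d| → #{y ∈ A | f y = q} ≤ #{y ∈ A | f y = p}

section Window

variable {β : Type*} (A : Finset β) (f : β → ℤ) {d : ℤ}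

lemma card_filter_abs_add_lt_le (hf : FiberSD A f d) (r t : ℤ) :
    #{y ∈ A | |2 * (f y + t) - d| < r} ≤ #{y ∈ A | |2 * f y - d| < r} := by
  set C : Finset ℤ := {j ∈ Icc (-(|d| + r)) (|d| + r) | |2 * j - d| < r}
  have hC : ∀ j, j ∈ C ↔ |2 * j - d| < r := by
    intro j
    simp only [C, mem_filter, mem_Icc, and_iff_right_iff_imp]
    intro h
    have := abs_lt.mp h
    have := le_abs_self d
    have := neg_abs_le d
    omega
  have hfiber : ∀ s : ℤ,
      #{y ∈ A | |2 * (f y + s) - d| < r} = ∑ j ∈ C, #{y ∈ A | f y = j - s} := by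
    intro s
    rw [← filter_congr fun y _ => hC (f y + s), ← sum_card_fiberwise_eq_card_filter]
    simp only [eq_sub_iff_add_eq]
  calc #{y ∈ A | |2 * (f y + t) - d| < r}
      = ∑ j ∈ C.image (· - t), #{y ∈ A | f y = j} := by
        rw [hfiber, sum_image fun _ _ _ _ h => sub_left_injective h]
    _ ≤ ∑ j ∈ C, #{y ∈ A | f y = j} := by
        refine sum_le_sum_of_card_eq _ (card_image_of_injective _ sub_left_injective) ?_
        intro a _ ha b hb
        exact hf b a (((hC b).mp hb).trans_le (not_lt.mp (mt (hC a).mpr ha))).le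
    _ = #{y ∈ A | |2 * f y - d| < r} := by simpa using (hfiber 0).symm

lemma card_filter_le_abs_add (hf : FiberSD A f d) (r t : ℤ) :
    #{y ∈ A | r ≤ |2 * f y - d|} ≤ #{y ∈ A | r ≤ |2 * (f y + t) - d|} := by
  have h₀ := card_filter_add_card_filter_not (s := A) fun y => r ≤ |2 * f y - d|
  have hₜ := card_filter_add_card_filter_not (s := A) fun y => r ≤ |2 * (f y + t) - d|
  have := card_filter_abs_add_lt_le A f hf r t
  simp only [not_le] at h₀ hₜ
  omega

end Window

lemma SDon.le_of_abs_le {f : ℝ → ℝ} {L : Set ℝ} {μ : ℝ} (h : SDon f L μ)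
    (hL : ∀ a ∈ L, 2 * μ - a ∈ L) {x y : ℝ} (hxy : |x| ≤ |y|) (hx : μ + x ∈ L)
    (hy : μ + y ∈ L) : f (μ + y) ≤ f (μ + x) := by
  have habs : ∀ x, μ + x ∈ L → μ + |x| ∈ L ∧ f (μ + |x|) = f (μ + x) := by
    intro x hx
    rcases abs_choice x with h' | h' <;> rw [h']
    · exact ⟨hx, rfl⟩
    · rw [← sub_eq_add_neg]
      exact ⟨by simpa [two_mul] using hL _ hx, h.1 x hx⟩
  obtain ⟨hxL, hfx⟩ := habs x hx
  obtain ⟨hyL, hfy⟩ := habs y hy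
  rw [← hfx, ← hfy]
  exact h.2 _ _ (abs_nonneg x) hxy hxL hyL

def unitStat (p : Bool × Bool) (a : Bool) : ℤ := if a then p.2.toNat else -p.1.toNat

def neymanNum {n : ℕ} (u : Fin n → Bool × Bool) (z : Fin n → Bool) : ℤ :=
  ∑ i, unitStat (u i) (z i)

def countDiff {n : ℕ} (u : Fin n → Bool × Bool) : ℤ :=
  ∑ i, ((u i).2.toNat - (u i).1.toNat : ℤ)

lemma b2r_eq_toNat (b : Bool) : b2r b = b.toNat := by
  cases b <;> simp [b2r]

lemma sate_eq_countDiff (n : ℕ) (u : Fin n → Bool × Bool) : sate n u = countDiff u / n := by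
  simp [sate, countDiff, b2r_eq_toNat]

lemma neyman_obsOutcome {n m : ℕ} (hn : n = 2 * m) (u : Fin n → Bool × Bool)
    (z : Fin n → Bool) : neyman n m (obsOutcome n u z) z = neymanNum u z / m := by
  have hnm : (n : ℝ) - m = m := by rw [hn]; push_cast; ring
  rw [neyman, hnm, div_sub_div_same, ← sum_sub_distrib, neymanNum]
  push_cast
  refine congrArg (· / _) (sum_congr rfl fun i _ => ?_)
  cases h : z i <;> simp [obsOutcome, unitStat, b2r_eq_toNat, h]

section Cons

variable {k : ℕ} (p : Bool × Bool) (u : Fin k → Bool × Bool)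

lemma neymanNum_cons (z : Fin (k + 1) → Bool) :
    neymanNum (Fin.cons p u : Fin (k + 1) → Bool × Bool) z
      = unitStat p (z 0) + neymanNum u (Fin.tail z) := by
  simp [neymanNum, Fin.sum_univ_succ, Fin.tail]

lemma countDiff_cons :
    countDiff (Fin.cons p u : Fin (k + 1) → Bool × Bool)
      = (p.2.toNat - p.1.toNat : ℤ) + countDiff u := by
  simp only [countDiff, Fin.sum_univ_succ, Fin.cons_zero, Fin.cons_succ]

lemma vcount_cons (a b : Bool) :
    vcount (k + 1) (Fin.cons p u) a b
      = (if p.2 = a ∧ p.1 = b then 1 else 0) + vcount k u a b := by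
  simp only [vcount, card_filter, Fin.sum_univ_succ, Fin.cons_zero, Fin.cons_succ]

lemma card_filter_cons_eq_true (a : Bool) (y : Fin k → Bool) :
    #{i | (Fin.cons a y : Fin (k + 1) → Bool) i = true} = a.toNat + #{i | y i = true} := by
  simp only [card_filter, Fin.sum_univ_succ, Fin.cons_zero, Fin.cons_succ]
  cases a <;> simp

end Cons

lemma Fin.cons_cons_tail_tail {k : ℕ} {α : Type*} (z : Fin (k + 2) → α) :
    (Fin.cons (z 0) (Fin.cons (z 1) (Fin.tail (Fin.tail z))) : Fin (k + 2) → α) = z := by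
  conv_rhs => rw [← Fin.cons_self_tail z, ← Fin.cons_self_tail (Fin.tail z)]
  simp [Fin.tail]

lemma exists_perm_eq_comp_of_card_fiber_eq {α β : Type*} [Fintype α] [DecidableEq β]
    (f g : α → β) (h : ∀ b, #{a | f a = b} = #{a | g a = b}) :
    ∃ σ : Equiv.Perm α, f = g ∘ σ := by
  classical
  let e : ∀ b, {a // f a = b} ≃ {a // g a = b} := fun b =>
    Fintype.equivOfCardEq (by rw [Fintype.card_subtype, Fintype.card_subtype, h])
  exact ⟨Equiv.ofFiberEquiv e, funext fun a => (Equiv.ofFiberEquiv_map e a).symm⟩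

section Relabel

variable {n : ℕ} (σ : Equiv.Perm (Fin n))

lemma comp_mem_Assign {m : ℕ} (z : Fin n → Bool) :
    z ∘ σ ∈ Assign n m ↔ z ∈ Assign n m := by
  simp only [Assign, mem_filter, mem_univ, true_and, Function.comp_apply]
  rw [card_equiv σ (t := {i | z i = true}) (by simp)]

lemma Pr_comp (m : ℕ) (E : (Fin n → Bool) → Prop) :
    Pr n m (fun z => E (z ∘ σ)) = Pr n m E := by
  unfold Pr
  congr 2
  refine card_nbij' (· ∘ σ) (· ∘ σ.symm) (fun z hz => ?_) (fun z hz => ?_)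
    (fun z _ => by ext; simp) (fun z _ => by ext; simp)
  · simpa [comp_mem_Assign] using hz
  · simpa [Function.comp_assoc, comp_mem_Assign] using hz

lemma neyman_comp (m : ℕ) (Y z : Fin n → Bool) :
    neyman n m (Y ∘ σ) (z ∘ σ) = neyman n m Y z := by
  simp only [neyman, Function.comp_apply]
  rw [Equiv.sum_comp σ (fun i => if z i then b2r (Y i) else 0),
    Equiv.sum_comp σ (fun i => if z i then 0 else b2r (Y i))]

lemma countDiff_comp (u : Fin n → Bool × Bool) : countDiff (u ∘ σ) = countDiff u :=
  Equiv.sum_comp σ fun i => ((u i).2.toNat - (u i).1.toNat : ℤ)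

lemma vcount_comp (u : Fin n → Bool × Bool) (a b : Bool) :
    vcount n (u ∘ σ) a b = vcount n u a b :=
  card_equiv σ (by simp)

lemma pval_comp (m : ℕ) (u : Fin n → Bool × Bool) (Y z : Fin n → Bool) :
    pval n m (u ∘ σ) Y z = pval n m u Y z := by
  have hT : ∀ z' : Fin n → Bool, neyman n m (obsOutcome n (u ∘ σ) z') z'
      = neyman n m (obsOutcome n u (z' ∘ σ.symm)) (z' ∘ σ.symm) := fun z' => by
    conv_lhs => rw [show z' = (z' ∘ σ.symm) ∘ σ by ext; simp]
    exact neyman_comp σ m (obsOutcome n u (z' ∘ σ.symm)) (z' ∘ σ.symm)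
  have hsate : sate n (u ∘ σ) = sate n u := by
    rw [sate_eq_countDiff, sate_eq_countDiff, countDiff_comp]
  simp only [pval, hsate, hT]
  exact Pr_comp σ.symm m fun z' =>
    |neyman n m (obsOutcome n u z') z' - sate n u| ≥ |neyman n m Y z - sate n u|

end Relabel

lemma pval_eq_of_vcount_eq {n : ℕ} (m : ℕ) {u u' : Fin n → Bool × Bool}
    (h : ∀ a b, vcount n u a b = vcount n u' a b) (Y z : Fin n → Bool) :
    pval n m u Y z = pval n m u' Y z := by
  obtain ⟨σ, rfl⟩ := exists_perm_eq_comp_of_card_fiber_eq u u' fun p => by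
    simpa [vcount, Prod.ext_iff, and_comm] using h p.2 p.1
  exact pval_comp σ m u' Y z

lemma exists_perm_comp_eq_cons_cons {k : ℕ} {α : Type*} (w : Fin (k + 2) → α)
    {i j : Fin (k + 2)} (hij : i ≠ j) :
    ∃ σ : Equiv.Perm (Fin (k + 2)), ∃ w₀ : Fin k → α,
      w ∘ σ = Fin.cons (w i) (Fin.cons (w j) w₀) := by
  obtain ⟨σ, hσ⟩ := Equiv.Perm.exists_extending_pair ![0, 1] ![i, j]
    (by simp [Function.Injective, Fin.forall_fin_two])
    (by simp [Function.Injective, Fin.forall_fin_two, hij, hij.symm])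
  refine ⟨σ, Fin.tail (Fin.tail (w ∘ σ)), ?_⟩
  have h0 := hσ 0
  have h1 := hσ 1
  simp only [Matrix.cons_val_zero, Matrix.cons_val_one] at h0 h1
  conv_lhs => rw [← Fin.cons_cons_tail_tail (w ∘ σ)]
  simp only [Function.comp_apply, h0, h1]

lemma neymanNum_cons_cons {k : ℕ} (p q : Bool × Bool) (u : Fin k → Bool × Bool)
    (z : Fin (k + 2) → Bool) :
    neymanNum (Fin.cons p (Fin.cons q u) : Fin (k + 2) → Bool × Bool) z
      = unitStat p (z 0) + unitStat q (z 1) + neymanNum u (Fin.tail (Fin.tail z)) := by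
  simp only [neymanNum_cons, Fin.tail, Fin.succ_zero_eq_one, add_assoc]

lemma card_filter_cons_cons {k m : ℕ} {a b : Bool} (hab : a ≠ b) (Q : (Fin k → Bool) → Prop)
    [DecidablePred Q] :
    #{z ∈ Assign (k + 2) (m + 1) | z 0 = a ∧ z 1 = b ∧ Q (Fin.tail (Fin.tail z))}
      = #{y ∈ Assign k m | Q y} := by
  have hAssign : ∀ y : Fin k → Bool,
      (Fin.cons a (Fin.cons b y) : Fin (k + 2) → Bool) ∈ Assign (k + 2) (m + 1)
        ↔ y ∈ Assign k m := by
    intro y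
    have : a.toNat + b.toNat = 1 := by cases a <;> cases b <;> simp_all
    simp only [Assign, mem_filter, mem_univ, true_and, card_filter_cons_eq_true]
    omega
  refine card_nbij' (fun z => Fin.tail (Fin.tail z)) (fun y => Fin.cons a (Fin.cons b y))
    (fun z hz => ?_) (fun y hy => ?_) (fun z hz => ?_) (fun y _ => by simp)
  · rw [mem_coe, mem_filter] at hz ⊢
    obtain ⟨hzA, rfl, rfl, hQ⟩ := hz
    rw [← Fin.cons_cons_tail_tail z, hAssign] at hzA
    exact ⟨hzA, hQ⟩
  · rw [mem_coe, mem_filter] at hy ⊢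
    exact ⟨(hAssign y).mpr hy.1, rfl, rfl, by simpa using hy.2⟩
  · rw [mem_coe, mem_filter] at hz
    obtain ⟨-, rfl, rfl, -⟩ := hz
    exact Fin.cons_cons_tail_tail z

lemma card_filter_split_zero_one {k : ℕ} (A : Finset (Fin (k + 2) → Bool))
    (P : (Fin (k + 2) → Bool) → Prop) [DecidablePred P] :
    #{z ∈ A | P z} =
      #{z ∈ A | z 0 = z 1 ∧ P z} + #{z ∈ A | z 0 = true ∧ z 1 = false ∧ P z}
        + #{z ∈ A | z 0 = false ∧ z 1 = true ∧ P z} := by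
  simp only [card_filter, ← sum_add_distrib]
  refine sum_congr rfl fun z _ => ?_
  cases z 0 <;> cases z 1 <;> by_cases hP : P z <;> simp [hP]

-- Pairs are `(w(0), w(1))`: `(false, true)` is a `(1,0)` unit, `(true, false)` a `(0,1)` unit.
def withDiscordant {k : ℕ} (u : Fin k → Bool × Bool) : Fin (k + 2) → Bool × Bool :=
  Fin.cons (false, true) (Fin.cons (true, false) u)

def withConcordant {k : ℕ} (u : Fin k → Bool × Bool) : Fin (k + 2) → Bool × Bool :=
  Fin.cons (true, true) (Fin.cons (false, false) u)

lemma countDiff_withDiscordant {k : ℕ} (u : Fin k → Bool × Bool) :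
    countDiff (withDiscordant u) = countDiff u := by
  simp [withDiscordant, countDiff_cons]

lemma countDiff_withConcordant {k : ℕ} (u : Fin k → Bool × Bool) :
    countDiff (withConcordant u) = countDiff u := by
  simp [withConcordant, countDiff_cons]

lemma card_filter_withDiscordant_le {k m : ℕ} (w₀ : Fin k → Bool × Bool) {d : ℤ}
    (hw₀ : FiberSD (Assign k m) (neymanNum w₀) d) (r : ℤ) :
    #{z ∈ Assign (k + 2) (m + 1) | r ≤ |2 * neymanNum (withDiscordant w₀) z - d|}
      ≤ #{z ∈ Assign (k + 2) (m + 1) | r ≤ |2 * neymanNum (withConcordant w₀) z - d|} := by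
  have hmixed : ∀ (p q : Bool × Bool) {a b : Bool}, a ≠ b →
      #{z ∈ Assign (k + 2) (m + 1) |
          z 0 = a ∧ z 1 = b ∧ r ≤ |2 * neymanNum (Fin.cons p (Fin.cons q w₀)) z - d|}
        = #{y ∈ Assign k m |
            r ≤ |2 * (neymanNum w₀ y + (unitStat p a + unitStat q b)) - d|} := by
    intro p q a b hab
    rw [← card_filter_cons_cons (m := m) hab fun y =>
      r ≤ |2 * (neymanNum w₀ y + (unitStat p a + unitStat q b)) - d|]
    refine congrArg card (filter_congr fun z _ => ?_)
    refine and_congr_right fun h₀ => and_congr_right fun h₁ => ?_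
    rw [neymanNum_cons_cons, h₀, h₁, add_comm (unitStat p a + unitStat q b)]
  have hdiag :
      #{z ∈ Assign (k + 2) (m + 1) |
          z 0 = z 1 ∧ r ≤ |2 * neymanNum (withDiscordant w₀) z - d|}
        = #{z ∈ Assign (k + 2) (m + 1) |
            z 0 = z 1 ∧ r ≤ |2 * neymanNum (withConcordant w₀) z - d|} := by
    refine congrArg card (filter_congr fun z _ => and_congr_right fun h => ?_)
    rw [withDiscordant, withConcordant, neymanNum_cons_cons, neymanNum_cons_cons, h]
    cases z 1 <;> simp [unitStat]
  rw [card_filter_split_zero_one,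
    card_filter_split_zero_one _ fun z => r ≤ |2 * neymanNum (withConcordant w₀) z - d|,
    withDiscordant, withConcordant, hmixed _ _ (a := true) (b := false) (by decide),
    hmixed _ _ (a := false) (b := true) (by decide),
    hmixed _ _ (a := true) (b := false) (by decide),
    hmixed _ _ (a := false) (b := true) (by decide)]
  simp only [unitStat, Bool.false_eq_true, if_true, if_false, Bool.toNat_true, Bool.toNat_false,
    Nat.cast_one, Nat.cast_zero, neg_zero, add_zero, add_neg_cancel]
  have h₁ := card_filter_le_abs_add (Assign k m) (neymanNum w₀) hw₀ r 1
  have h₂ := card_filter_le_abs_add (Assign k m) (neymanNum w₀) hw₀ r (-1)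
  exact add_le_add (add_le_add hdiag.le h₁) h₂

lemma pval_eq_card_div {n m : ℕ} (hn : n = 2 * m) (hm : 0 < m) (u : Fin n → Bool × Bool)
    (Y z : Fin n → Bool) :
    pval n m u Y z = #{z' ∈ Assign n m | ⌈(n : ℝ) * |neyman n m Y z - sate n u|⌉
      ≤ |2 * neymanNum u z' - countDiff u|} / #(Assign n m) := by
  have hn' : (0 : ℝ) < n := by rw [hn]; positivity
  unfold pval Pr
  generalize |neyman n m Y z - sate n u| = c
  congr 2
  refine congrArg card (filter_congr fun z' _ => ?_)
  have hT : (neymanNum u z' : ℝ) / m - countDiff u / n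
      = (2 * neymanNum u z' - countDiff u) / n := by
    rw [show (n : ℝ) = 2 * m by exact_mod_cast hn]
    field_simp
  rw [Int.ceil_le, ge_iff_le, neyman_obsOutcome hn, sate_eq_countDiff, hT, abs_div,
    abs_of_pos hn', le_div_iff₀ hn', mul_comm]
  push_cast
  rfl

lemma fiberSD_of_SDon {k m : ℕ} (hk : k = 2 * m) (u : Fin k → Bool × Bool)
    (h : SDon (pmfT k m u) (lattZ m) (sate k u)) :
    FiberSD (Assign k m) (neymanNum u) (countDiff u) := by
  intro p q hpq
  rcases Nat.eq_zero_or_pos m with rfl | hm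
  · subst hk
    have hd : countDiff u = 0 := by simp [countDiff]
    rw [hd, sub_zero, sub_zero] at hpq
    rcases eq_or_ne q 0 with rfl | hq
    · obtain rfl : p = 0 := abs_eq_zero.mp (by simp at hpq; linarith [abs_nonneg p])
      rfl
    · simp [neymanNum, hq.symm]
  have hm' : (0 : ℝ) < m := by exact_mod_cast hm
  have hpmf : ∀ j : ℤ,
      pmfT k m u (j / m) = #{y ∈ Assign k m | neymanNum u y = j} / #(Assign k m) := by
    intro j
    unfold pmfT Pr
    congr 2
    refine congrArg card (filter_congr fun y _ => ?_)
    rw [neyman_obsOutcome hk, div_left_inj' hm'.ne', Int.cast_inj]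
  have hμ : sate k u = countDiff u / (2 * m) := by
    rw [sate_eq_countDiff]
    congr 1
    exact_mod_cast hk
  have hlatt : ∀ j : ℤ, sate k u + (2 * j - countDiff u) / (2 * m) = j / m := by
    intro j; rw [hμ]; field_simp; ring
  have key := h.le_of_abs_le (x := (2 * p - countDiff u) / (2 * m))
    (y := (2 * q - countDiff u) / (2 * m))
    (fun a ⟨j, hj⟩ => ⟨countDiff u - j, by rw [hj, hμ]; push_cast; field_simp⟩)
    (by rw [abs_div, abs_div]
        exact div_le_div_of_nonneg_right (by exact_mod_cast hpq) (by positivity))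
    (by rw [hlatt]; exact ⟨p, rfl⟩) (by rw [hlatt]; exact ⟨q, rfl⟩)
  rw [hlatt, hlatt, hpmf, hpmf] at key
  rcases (#(Assign k m)).eq_zero_or_pos with hN | hN
  · exact (card_filter_le _ _).trans (hN ▸ Nat.zero_le _)
  · exact_mod_cast (div_le_div_iff_of_pos_right (by exact_mod_cast hN)).mp key

lemma pval_withDiscordant_le {k m : ℕ} (hk : k = 2 * m) (w₀ : Fin k → Bool × Bool)
    (hw₀ : FiberSD (Assign k m) (neymanNum w₀) (countDiff w₀)) (Y z : Fin (k + 2) → Bool) :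
    pval (k + 2) (m + 1) (withDiscordant w₀) Y z
      ≤ pval (k + 2) (m + 1) (withConcordant w₀) Y z := by
  have hn : k + 2 = 2 * (m + 1) := by omega
  rw [pval_eq_card_div hn m.succ_pos, pval_eq_card_div hn m.succ_pos, sate_eq_countDiff,
    sate_eq_countDiff, countDiff_withDiscordant, countDiff_withConcordant]
  exact div_le_div_of_nonneg_right (by exact_mod_cast card_filter_withDiscordant_le w₀ hw₀ _)
    (Nat.cast_nonneg _)

lemma exists_eq_of_one_le_vcount {n : ℕ} {u : Fin n → Bool × Bool} {a b : Bool}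
    (h : 1 ≤ vcount n u a b) : ∃ i, u i = (b, a) := by
  obtain ⟨i, hi⟩ := card_pos.mp h
  rw [mem_filter] at hi
  exact ⟨i, Prod.ext hi.2.2 hi.2.1⟩

theorem stmt9_general (m : ℕ) (n : ℕ) (hn : n = 2 * m)
    (Y z : Fin n → Bool)
    (v11 v10 v01 v00 : ℕ) (hsum : v11 + v10 + v01 + v00 = n)
    (h10 : 1 ≤ v10) (h01 : 1 ≤ v01)
    (hSD : ∀ w0 : Fin (n - 2) → Bool × Bool,
      vcount (n - 2) w0 true true = v11 → vcount (n - 2) w0 true false = v10 - 1 →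
      vcount (n - 2) w0 false true = v01 - 1 → vcount (n - 2) w0 false false = v00 →
      SDon (pmfT (n - 2) (m - 1) w0) (lattZ (m - 1)) (sate (n - 2) w0))
    (w w' : Fin n → Bool × Bool)
    (hw : vcount n w true true = v11 ∧ vcount n w true false = v10 ∧
      vcount n w false true = v01 ∧ vcount n w false false = v00)
    (hw' : vcount n w' true true = v11 + 1 ∧ vcount n w' true false = v10 - 1 ∧
      vcount n w' false true = v01 - 1 ∧ vcount n w' false false = v00 + 1) :
    pval n m w Y z ≤ pval n m w' Y z := by
  obtain ⟨k, rfl⟩ : ∃ k, n = k + 2 := ⟨n - 2, by omega⟩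
  obtain ⟨m, rfl⟩ : ∃ m', m = m' + 1 := ⟨m - 1, by omega⟩
  have hk : k = 2 * m := by omega
  rw [Nat.add_sub_cancel, Nat.add_sub_cancel] at hSD
  obtain ⟨h₁₁, h₁₀, h₀₁, h₀₀⟩ := hw
  obtain ⟨i₀, hi₀⟩ := exists_eq_of_one_le_vcount (h₁₀ ▸ h10)
  obtain ⟨i₁, hi₁⟩ := exists_eq_of_one_le_vcount (h₀₁ ▸ h01)
  obtain ⟨σ, w₀, hσ⟩ := exists_perm_comp_eq_cons_cons w (i := i₀) (j := i₁)
    fun h => by simp [h, hi₁] at hi₀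
  rw [hi₀, hi₁] at hσ
  change w ∘ σ = withDiscordant w₀ at hσ
  simp only [← vcount_comp σ w, hσ, withDiscordant, vcount_cons, Bool.false_eq_true,
    Bool.true_eq_false, and_true, and_false, and_self, ↓reduceIte, zero_add]
    at h₁₁ h₁₀ h₀₁ h₀₀
  have hw' : ∀ a b, vcount (k + 2) w' a b = vcount (k + 2) (withConcordant w₀) a b := by
    obtain ⟨h₁₁', h₁₀', h₀₁', h₀₀'⟩ := hw'
    intro a b
    cases a <;> cases b <;> simp only [withConcordant, vcount_cons, Bool.false_eq_true,
      Bool.true_eq_false, and_true, and_false, and_self, ↓reduceIte, zero_add] <;> omega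
  calc pval (k + 2) (m + 1) w Y z
      = pval (k + 2) (m + 1) (w ∘ σ) Y z := (pval_comp σ _ w Y z).symm
    _ = pval (k + 2) (m + 1) (withDiscordant w₀) Y z := by rw [hσ]
    _ ≤ pval (k + 2) (m + 1) (withConcordant w₀) Y z :=
      pval_withDiscordant_le hk w₀ (fiberSD_of_SDon hk w₀
        (hSD w₀ h₁₁ (by omega) (by omega) h₀₀)) Y z
    _ = pval (k + 2) (m + 1) w' Y z := (pval_eq_of_vcount_eq _ hw' Y z).symm

/-- Balanced design, `v = (v₁₁, v₁₀, v₀₁, v₀₀)` with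
`min(v₁₀, v₀₁) ≥ 1`, `v' = (v₁₁+1, v₁₀−1, v₀₁−1, v₀₀+1)` and
`v° = (v₁₁, v₁₀−1, v₀₁−1, v₀₀)`.  If the pmf of `T(v°, Z')`, with `Z'` uniform on the
assignments of `n − 2` subjects with `m − 1` treated, is symmetric–decreasing on the
lattice `(m−1)⁻¹ℤ`, then `p(v', n⃗) ≥ p(v, n⃗)`. -/
theorem stmt9 (m : ℕ) (hm : 0 < m) (n : ℕ) (hn : n = 2 * m)
    (Y z : Fin n → Bool) (hz : z ∈ Assign n m)
    (v11 v10 v01 v00 : ℕ) (hsum : v11 + v10 + v01 + v00 = n)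
    (h10 : 1 ≤ v10) (h01 : 1 ≤ v01)
    (hSD : ∀ w0 : Fin (n - 2) → Bool × Bool,
      vcount (n - 2) w0 true true = v11 → vcount (n - 2) w0 true false = v10 - 1 →
      vcount (n - 2) w0 false true = v01 - 1 → vcount (n - 2) w0 false false = v00 →
      SDon (pmfT (n - 2) (m - 1) w0) (lattZ (m - 1)) (sate (n - 2) w0))
    (w w' : Fin n → Bool × Bool)
    (hw : vcount n w true true = v11 ∧ vcount n w true false = v10 ∧
      vcount n w false true = v01 ∧ vcount n w false false = v00)
    (hw' : vcount n w' true true = v11 + 1 ∧ vcount n w' true false = v10 - 1 ∧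
      vcount n w' false true = v01 - 1 ∧ vcount n w' false false = v00 + 1) :
    pval n m w Y z ≤ pval n m w' Y z :=
  stmt9_general m n hn Y z v11 v10 v01 v00 hsum h10 h01 hSD w w' hw hw'
end

section
/- Let X₁ be a random variable whose probability mass function is symmetric–decreasing on the lattice m^{-1}ℤ, and let X₂ be independent of X₁ and uniformly distributed on {0, m^{-1}}. Then the probability mass function of X₁ + X₂ is symmetric–decreasing on m^{-1}ℤ. -/
open Finset

lemma latt_shift {m : ℕ} {x : ℝ} (h : x ∈ lattZ m) (k : ℤ) :
    x + (k : ℝ) / m ∈ lattZ m := by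
  obtain ⟨j, rfl⟩ := h
  exact ⟨j + k, by push_cast; ring⟩

lemma latt_diff {m : ℕ} {p q : ℝ} (hp : p ∈ lattZ m) (hq : q ∈ lattZ m) :
    ∃ k : ℤ, q - p = (k : ℝ) / m := by
  obtain ⟨j, rfl⟩ := hp; obtain ⟨i, rfl⟩ := hq
  exact ⟨i - j, by push_cast; ring⟩

/-- If the pmf `f` of a random variable `X₁` is symmetric–decreasing
on the lattice `m⁻¹ℤ` (about `μ`), and `X₂` is independent of `X₁` and uniform on
`{0, m⁻¹}`, then the pmf of `X₁ + X₂`, namely `x ↦ (f x + f (x − 1/m)) / 2`, is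
symmetric–decreasing on `m⁻¹ℤ` (about `μ + 1/(2m)`). -/
theorem stmt10 (m : ℕ) (hm : 0 < m) (f : ℝ → ℝ) (μ : ℝ)
    (hnn : ∀ x, 0 ≤ f x) (hsupp : ∀ x, x ∉ lattZ m → f x = 0)
    (hSD : SDon f (lattZ m) μ) :
    SDon (fun x => (f x + f (x - 1 / (m : ℝ))) / 2) (lattZ m)
      (μ + 1 / (2 * (m : ℝ))) := by
  obtain ⟨hsym, hdec⟩ := hSD
  have hm' : (0:ℝ) < m := by exact_mod_cast hm
  constructor
  · -- symmetry
    intro x hx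
    dsimp only
    have hmem1 : μ + (x - 1 / (2 * (m:ℝ))) ∈ lattZ m := by
      have := latt_shift hx (-1)
      have e : μ + 1 / (2 * (m:ℝ)) + x + ((-1 : ℤ) : ℝ) / m
          = μ + (x - 1 / (2 * (m:ℝ))) := by push_cast; field_simp; ring
      rwa [e] at this
    have hmem2 : μ + (x + 1 / (2 * (m:ℝ))) ∈ lattZ m := by
      have e : μ + (x + 1 / (2 * (m:ℝ))) = μ + 1 / (2 * (m:ℝ)) + x := by ring
      rwa [e]
    have h1 := hsym _ hmem1
    have h2 := hsym _ hmem2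
    have e1 : μ - (x - 1 / (2 * (m:ℝ))) = μ + 1 / (2 * (m:ℝ)) - x := by ring
    have e2 : μ + (x - 1 / (2 * (m:ℝ))) = μ + 1 / (2 * (m:ℝ)) + x - 1 / (m:ℝ) := by
      field_simp; ring
    have e3 : μ - (x + 1 / (2 * (m:ℝ))) = μ + 1 / (2 * (m:ℝ)) - x - 1 / (m:ℝ) := by
      field_simp; ring
    have e4 : μ + (x + 1 / (2 * (m:ℝ))) = μ + 1 / (2 * (m:ℝ)) + x := by ring
    rw [e1, e2] at h1
    rw [e3, e4] at h2
    linarith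
  · -- decreasing
    intro x y hx0 hxy hxL hyL
    dsimp only
    -- memberships of the shifted points
    have hxL2 : μ + (x - 1 / (2 * (m:ℝ))) ∈ lattZ m := by
      have := latt_shift hxL (-1)
      have e : μ + 1 / (2 * (m:ℝ)) + x + ((-1 : ℤ) : ℝ) / m
          = μ + (x - 1 / (2 * (m:ℝ))) := by push_cast; field_simp; ring
      rwa [e] at this
    have hyL2 : μ + (y - 1 / (2 * (m:ℝ))) ∈ lattZ m := by
      have := latt_shift hyL (-1)
      have e : μ + 1 / (2 * (m:ℝ)) + y + ((-1 : ℤ) : ℝ) / m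
          = μ + (y - 1 / (2 * (m:ℝ))) := by push_cast; field_simp; ring
      rwa [e] at this
    have hxL1 : μ + (x + 1 / (2 * (m:ℝ))) ∈ lattZ m := by
      have e : μ + (x + 1 / (2 * (m:ℝ))) = μ + 1 / (2 * (m:ℝ)) + x := by ring
      rwa [e]
    have hyL1 : μ + (y + 1 / (2 * (m:ℝ))) ∈ lattZ m := by
      have e : μ + (y + 1 / (2 * (m:ℝ))) = μ + 1 / (2 * (m:ℝ)) + y := by ring
      rwa [e]
    obtain ⟨k, hk⟩ := latt_diff hxL hyL
    have hk' : y - x = (k : ℝ) / m := by linarith [hk]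
    have hkpos : (0:ℝ) ≤ (k:ℝ) / m := by linarith
    by_cases hk0 : k = 0
    · -- y = x
      have hxy' : y = x := by
        rw [hk0] at hk'; push_cast at hk'
        have : y - x = 0 := by rw [hk']; simp
        linarith
      rw [hxy']
    · -- k ≥ 1, so y ≥ x + 1/m
      have hk1 : (1:ℤ) ≤ k := by
        rcases lt_or_ge k 0 with h | h
        · exfalso
          have : (k:ℝ) < 0 := by exact_mod_cast h
          have : (k:ℝ) / m < 0 := div_neg_of_neg_of_pos this hm'
          linarith
        · omega
      have hy1 : x + 1 / (m:ℝ) ≤ y := by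
        have : (1:ℝ) / m ≤ (k:ℝ) / m := by
          gcongr
          exact_mod_cast hk1
        linarith
      -- first term
      have t1 : f (μ + 1 / (2 * (m:ℝ)) + y) ≤ f (μ + 1 / (2 * (m:ℝ)) + x) := by
        have := hdec (x + 1 / (2 * (m:ℝ))) (y + 1 / (2 * (m:ℝ)))
          (by positivity) (by linarith) hxL1 hyL1
        have e1 : μ + (x + 1 / (2 * (m:ℝ))) = μ + 1 / (2 * (m:ℝ)) + x := by ring
        have e2 : μ + (y + 1 / (2 * (m:ℝ))) = μ + 1 / (2 * (m:ℝ)) + y := by ring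
        rwa [e1, e2] at this
      -- second term
      have t2 : f (μ + 1 / (2 * (m:ℝ)) + y - 1 / (m:ℝ))
          ≤ f (μ + 1 / (2 * (m:ℝ)) + x - 1 / (m:ℝ)) := by
        have e1 : μ + (x - 1 / (2 * (m:ℝ))) = μ + 1 / (2 * (m:ℝ)) + x - 1 / (m:ℝ) := by
          field_simp; ring
        have e2 : μ + (y - 1 / (2 * (m:ℝ))) = μ + 1 / (2 * (m:ℝ)) + y - 1 / (m:ℝ) := by
          field_simp; ring
        rw [← e1, ← e2]
        rcases le_or_gt 0 (x - 1 / (2 * (m:ℝ))) with hs | hs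
        · exact hdec _ _ hs (by linarith) hxL2 hyL2
        · -- reflect the smaller point
          have hsym2 := hsym _ hxL2
          by_cases hrefl : μ + (1 / (2 * (m:ℝ)) - x) ∈ lattZ m
          · have hd := hdec (1 / (2 * (m:ℝ)) - x) (y - 1 / (2 * (m:ℝ)))
              (by linarith) (by linarith) hrefl hyL2
            have e3 : μ - (x - 1 / (2 * (m:ℝ))) = μ + (1 / (2 * (m:ℝ)) - x) := by ring
            rw [e3] at hsym2
            linarith
          · -- f vanishes at both points
            have hz : f (μ + (y - 1 / (2 * (m:ℝ)))) = 0 := by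
              have hsym3 := hsym _ hyL2
              have hnot : μ - (y - 1 / (2 * (m:ℝ))) ∉ lattZ m := by
                intro hmem
                apply hrefl
                have := latt_shift hmem k
                have e : μ - (y - 1 / (2 * (m:ℝ))) + (k:ℝ) / m
                    = μ + (1 / (2 * (m:ℝ)) - x) := by rw [← hk']; ring
                rwa [e] at this
              rw [← hsym3]
              exact hsupp _ hnot
            rw [hz]
            exact hnn _
      linarith
end

section
/- Let n = 2m and fix a count vector of the form v = (v₁₁, 0, 0, v₀₀) with v₁₁ + v₀₀ = n. Then the probability mass function of T(v, Z) is symmetric–decreasing on the lattice m^{-1}(2ℤ) if v₁₁ is even, and symmetric–decreasing on the lattice m^{-1}(2ℤ + 1) if v₁₁ is odd. -/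
open Finset

/-!
When `v₁₀ = v₀₁ = 0` the observed outcomes do not depend on the assignment, `τ = 0`, and with
`A` the set of subjects with outcome `1` and `T` the treated set, `T(v, Z) = (2 |T ∩ A| - |A|) / m`.
Swapping treatment and control negates the estimator, which gives the symmetry about `0`.
The count `|T ∩ A|` is hypergeometric, `#{T : |T ∩ A| = s} = C(|A|, s) C(n - |A|, m - s)`, and in a
balanced design the ratio of consecutive terms is at most `1` as soon as `|A| ≤ 2 s`; this is
the decrease away from `0` along the points `(2 s - |A|) / m`, which fill exactly the nonnegative
part of `m⁻¹(2ℤ)` or of `m⁻¹(2ℤ + 1)` according to the parity of `|A| = v₁₁`.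
-/

theorem choose_mul_choose_succ_le {a b m s : ℕ} (hab : a + b = 2 * m) (has : a ≤ 2 * s)
    (hsm : s < m) :
    a.choose (s + 1) * b.choose (m - (s + 1)) ≤ a.choose s * b.choose (m - s) := by
  obtain ⟨r, hr⟩ : ∃ r, m - s = r + 1 := ⟨m - s - 1, by omega⟩
  rw [show m - (s + 1) = r by omega, hr]
  refine Nat.le_of_mul_le_mul_right (c := (s + 1) * (r + 1)) ?_ (Nat.mul_pos s.succ_pos r.succ_pos)
  calc a.choose (s + 1) * b.choose r * ((s + 1) * (r + 1))
      = a.choose (s + 1) * (s + 1) * b.choose r * (r + 1) := by ring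
    _ = a.choose s * b.choose r * ((a - s) * (r + 1)) := by
      rw [Nat.choose_succ_right_eq]; ring
    _ ≤ a.choose s * b.choose r * ((s + 1) * (b - r)) :=
      Nat.mul_le_mul_left _ (Nat.mul_le_mul (by omega) (by omega))
    _ = a.choose s * (b.choose (r + 1) * (r + 1)) * (s + 1) := by
      rw [Nat.choose_succ_right_eq]; ring
    _ = a.choose s * b.choose (r + 1) * ((s + 1) * (r + 1)) := by ring

section Hypergeometric

variable {α : Type*} [Fintype α] [DecidableEq α]

theorem card_powersetCard_filter_card_inter_eq (A : Finset α) {m k : ℕ} (hk : k ≤ m) :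
    #((powersetCard m univ).filter fun s => #(s ∩ A) = k) =
      (#A).choose k * (#Aᶜ).choose (m - k) := by
  rw [← card_powersetCard k A, ← card_powersetCard (m - k) Aᶜ, ← card_product]
  refine card_nbij' (fun s => (s ∩ A, s \ A)) (fun p => p.1 ∪ p.2) ?_ ?_ ?_ ?_
  · intro s hs
    simp only [coe_filter, mem_powersetCard, subset_univ, true_and, Set.mem_ofPred_eq] at hs
    have hsplit := card_inter_add_card_sdiff s A
    simp only [coe_product, Set.mem_prod, mem_coe, mem_powersetCard]
    refine ⟨⟨inter_subset_right, hs.2⟩, fun x hx => ?_, by omega⟩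
    simp only [mem_sdiff] at hx
    simpa using hx.2
  · rintro ⟨P, Q⟩ hPQ
    simp only [coe_product, Set.mem_prod, mem_coe, mem_powersetCard] at hPQ
    obtain ⟨⟨hPA, hP⟩, hQA, hQ⟩ := hPQ
    have hdisj : Disjoint P Q := disjoint_compl_right.mono hPA hQA
    have hinter : (P ∪ Q) ∩ A = P := by grind [mem_compl]
    simp only [coe_filter, mem_powersetCard, subset_univ, true_and, Set.mem_ofPred_eq,
      card_union_of_disjoint hdisj, hinter]
    omega
  · intro s _
    exact sup_inf_sdiff s A
  · rintro ⟨P, Q⟩ hPQ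
    simp only [coe_product, Set.mem_prod, mem_coe, mem_powersetCard] at hPQ
    obtain ⟨⟨hPA, -⟩, hQA, -⟩ := hPQ
    ext x <;> grind [mem_compl]

theorem card_powersetCard_filter_card_inter_eq_zero (A : Finset α) {m k : ℕ} (hk : m < k) :
    #((powersetCard m univ).filter fun s => #(s ∩ A) = k) = 0 := by
  rw [card_eq_zero, filter_eq_empty_iff]
  intro s hs hsk
  have := card_le_card (inter_subset_left (s₁ := s) (s₂ := A))
  rw [(mem_powersetCard.mp hs).2] at this
  omega

theorem card_powersetCard_filter_card_inter_antitone
    (A : Finset α) {m s t : ℕ} (hα : Fintype.card α = 2 * m) (hs : #A ≤ 2 * s) (hst : s ≤ t) :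
    #((powersetCard m univ).filter fun u => #(u ∩ A) = t) ≤
      #((powersetCard m univ).filter fun u => #(u ∩ A) = s) := by
  induction t, hst using Nat.le_induction with
  | base => exact le_rfl
  | succ t hst ih =>
    refine le_trans ?_ ih
    rcases lt_or_ge t m with htm | hmt
    · rw [card_powersetCard_filter_card_inter_eq A htm,
        card_powersetCard_filter_card_inter_eq A htm.le]
      exact choose_mul_choose_succ_le (by rw [card_add_card_compl, hα]) (by omega) htm
    · rw [card_powersetCard_filter_card_inter_eq_zero A (by omega)]
      exact Nat.zero_le _

end Hypergeometric

section Assignments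

variable {n m : ℕ}

def trueSet (z : Fin n → Bool) : Finset (Fin n) := {i | z i = true}

@[simp]
theorem mem_trueSet {z : Fin n → Bool} {i : Fin n} : i ∈ trueSet z ↔ z i = true := by
  simp [trueSet]

theorem trueSet_not (z : Fin n → Bool) : trueSet (fun i => !z i) = (trueSet z)ᶜ := by
  ext i
  simp

theorem mem_Assign {z : Fin n → Bool} : z ∈ Assign n m ↔ #(trueSet z) = m := by
  simp [Assign, trueSet]

theorem compl_mem_Assign {z : Fin n → Bool} (hz : z ∈ Assign n m) :
    (fun i => !z i) ∈ Assign n (n - m) := by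
  rw [mem_Assign] at hz ⊢
  rw [trueSet_not, card_compl, Fintype.card_fin, hz]

theorem Pr_eq_card_div (E : (Fin n → Bool) → Prop) [DecidablePred E] :
    Pr n m E = #((Assign n m).filter E) / #(Assign n m) := by
  unfold Pr
  congr

theorem card_filter_Assign (P : Finset (Fin n) → Prop) [DecidablePred P] :
    #((Assign n m).filter fun z => P (trueSet z)) = #((powersetCard m univ).filter P) := by
  refine card_nbij' trueSet (fun s i => decide (i ∈ s)) ?_ ?_ ?_ ?_
  · intro z hz
    simp only [coe_filter, mem_Assign, Set.mem_ofPred_eq, mem_powersetCard] at hz ⊢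
    exact ⟨⟨subset_univ _, hz.1⟩, hz.2⟩
  · intro s hs
    have hs' : trueSet (fun i => decide (i ∈ s)) = s := by ext i; simp
    simp only [coe_filter, mem_Assign, Set.mem_ofPred_eq, mem_powersetCard, hs'] at hs ⊢
    exact ⟨hs.1.2, hs.2⟩
  · intro z _
    funext i
    simp
  · intro s _
    ext i
    simp

theorem card_filter_Assign_not (h : m ≤ n) (E : (Fin n → Bool) → Prop) [DecidablePred E] :
    #((Assign n m).filter fun z => E fun i => !z i) = #((Assign n (n - m)).filter E) := by
  refine card_nbij' (fun z i => !z i) (fun z i => !z i) ?_ ?_ ?_ ?_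
  · intro z hz
    simp only [coe_filter, Set.mem_ofPred_eq] at hz ⊢
    exact ⟨compl_mem_Assign hz.1, hz.2⟩
  · intro z hz
    simp only [coe_filter, Set.mem_ofPred_eq, Bool.not_not] at hz ⊢
    refine ⟨?_, hz.2⟩
    simpa [Nat.sub_sub_self h] using compl_mem_Assign hz.1
  · intro z _
    simp
  · intro z _
    simp

theorem Pr_comp_not (h : m ≤ n) (E : (Fin n → Bool) → Prop) :
    Pr n m (fun z => E fun i => !z i) = Pr n (n - m) E := by
  classical
  rw [Pr_eq_card_div, Pr_eq_card_div]
  congr 2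
  · convert card_filter_Assign_not h E
  · simpa using card_filter_Assign_not h (fun _ => True)

end Assignments

section Neyman

variable {n m : ℕ}

theorem neyman_eq_card (Y z : Fin n → Bool) :
    neyman n m Y z = #(trueSet z ∩ trueSet Y) / m - #(trueSet Y \ trueSet z) / ((n : ℝ) - m) := by
  have htreated (j : Fin n) :
      (if z j then b2r (Y j) else 0) = if j ∈ trueSet z ∩ trueSet Y then (1 : ℝ) else 0 := by
    cases hz : z j <;> cases hY : Y j <;> simp [b2r, hz, hY]
  have hcontrol (j : Fin n) :
      (if z j then 0 else b2r (Y j)) = if j ∈ trueSet Y \ trueSet z then (1 : ℝ) else 0 := by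
    cases hz : z j <;> cases hY : Y j <;> simp [b2r, hz, hY]
  simp only [neyman, htreated, hcontrol, sum_boole, filter_mem_eq_inter, univ_inter]

theorem neyman_two_mul (Y z : Fin (2 * m) → Bool) :
    neyman (2 * m) m Y z = (2 * #(trueSet z ∩ trueSet Y) - #(trueSet Y)) / m := by
  have hsplit := card_inter_add_card_sdiff (trueSet Y) (trueSet z)
  rw [inter_comm] at hsplit
  rw [neyman_eq_card, ← hsplit]
  push_cast
  ring

theorem neyman_not (Y z : Fin (2 * m) → Bool) :
    neyman (2 * m) m Y (fun i => !z i) = -neyman (2 * m) m Y z := by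
  have hcompl : (trueSet z)ᶜ ∩ trueSet Y = trueSet Y \ trueSet z := by
    rw [sdiff_eq_inter_compl, inter_comm]
  have hsplit := card_inter_add_card_sdiff (trueSet Y) (trueSet z)
  rw [neyman_two_mul, neyman_two_mul, trueSet_not, hcompl, ← hsplit, inter_comm (trueSet Y)]
  push_cast
  ring

end Neyman

section Balanced

variable {m : ℕ}

theorem Pr_neyman_neg (Y : Fin (2 * m) → Bool) (t : ℝ) :
    Pr (2 * m) m (fun z => neyman (2 * m) m Y z = -t) =
      Pr (2 * m) m (fun z => neyman (2 * m) m Y z = t) := by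
  have h := Pr_comp_not (n := 2 * m) (m := m) (by omega) fun z => neyman (2 * m) m Y z = t
  rw [show 2 * m - m = m by omega] at h
  rw [← h]
  simp only [neyman_not, neg_eq_iff_eq_neg]

theorem Pr_neyman_eq_card_div (hm : 0 < m) (Y : Fin (2 * m) → Bool) (s : ℕ) :
    Pr (2 * m) m (fun z => neyman (2 * m) m Y z = (2 * s - #(trueSet Y)) / m) =
      #((powersetCard m univ).filter fun u => #(u ∩ trueSet Y) = s) / #(Assign (2 * m) m) := by
  have hiff (z : Fin (2 * m) → Bool) :
      neyman (2 * m) m Y z = (2 * s - #(trueSet Y)) / m ↔ #(trueSet z ∩ trueSet Y) = s := by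
    rw [neyman_two_mul, div_left_inj' (by positivity), sub_left_inj,
      mul_right_inj' two_ne_zero, Nat.cast_inj]
  simp only [hiff]
  rw [Pr_eq_card_div, card_filter_Assign fun u => #(u ∩ trueSet Y) = s]

theorem Pr_neyman_antitone (hm : 0 < m) (Y : Fin (2 * m) → Bool) {s₁ s₂ : ℕ}
    (h₁ : #(trueSet Y) ≤ 2 * s₁) (h₁₂ : s₁ ≤ s₂) :
    Pr (2 * m) m (fun z => neyman (2 * m) m Y z = (2 * s₂ - #(trueSet Y)) / m) ≤
      Pr (2 * m) m (fun z => neyman (2 * m) m Y z = (2 * s₁ - #(trueSet Y)) / m) := by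
  rw [Pr_neyman_eq_card_div hm, Pr_neyman_eq_card_div hm]
  refine div_le_div_of_nonneg_right ?_ (Nat.cast_nonneg _)
  exact_mod_cast card_powersetCard_filter_card_inter_antitone _ (Fintype.card_fin _) h₁ h₁₂

end Balanced

theorem SDon_zero_of_neg_of_antitone {f : ℝ → ℝ} {L : Set ℝ} {m a : ℕ} (hm : 0 < m)
    (hneg : ∀ t, f (-t) = f t)
    (hanti : ∀ s₁ s₂ : ℕ, a ≤ 2 * s₁ → s₁ ≤ s₂ → f ((2 * s₂ - a) / m) ≤ f ((2 * s₁ - a) / m))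
    (hL : ∀ x ∈ L, 0 ≤ x → ∃ s : ℕ, a ≤ 2 * s ∧ x = (2 * s - a) / m) :
    SDon f L 0 := by
  refine ⟨fun x _ => by rw [zero_sub, zero_add, hneg], fun x y hx hxy hxL hyL => ?_⟩
  simp only [zero_add] at hxL hyL ⊢
  obtain ⟨s₁, ha, rfl⟩ := hL x hxL hx
  obtain ⟨s₂, -, rfl⟩ := hL y hyL (hx.trans hxy)
  refine hanti s₁ s₂ ha ?_
  have := (div_le_div_iff_of_pos_right (by positivity : (0 : ℝ) < m)).mp hxy
  exact_mod_cast (by linarith : (s₁ : ℝ) ≤ s₂)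

theorem exists_nat_of_mem_lattEven {m a : ℕ} (hm : 0 < m) (ha : Even a) {x : ℝ}
    (hx : x ∈ lattEven m) (h0 : 0 ≤ x) : ∃ s : ℕ, a ≤ 2 * s ∧ x = (2 * s - a) / m := by
  obtain ⟨k, rfl⟩ := hx
  obtain ⟨c, rfl⟩ := ha
  have hk : (0 : ℝ) ≤ 2 * k := by simpa using (le_div_iff₀ (by positivity)).mp h0
  lift k to ℕ using (by exact_mod_cast (by linarith : (0 : ℝ) ≤ k))
  refine ⟨k + c, by omega, ?_⟩
  push_cast
  ring

theorem exists_nat_of_mem_lattOdd {m a : ℕ} (hm : 0 < m) (ha : Odd a) {x : ℝ}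
    (hx : x ∈ lattOdd m) (h0 : 0 ≤ x) : ∃ s : ℕ, a ≤ 2 * s ∧ x = (2 * s - a) / m := by
  obtain ⟨k, rfl⟩ := hx
  obtain ⟨c, rfl⟩ := ha
  have hk : (0 : ℝ) ≤ 2 * k + 1 := by simpa using (le_div_iff₀ (by positivity)).mp h0
  have hk' : (0 : ℤ) ≤ 2 * k + 1 := by exact_mod_cast hk
  lift k to ℕ using (by omega)
  refine ⟨k + c + 1, by omega, ?_⟩
  push_cast
  ring

section Tables

variable {n : ℕ} {w : Fin n → Bool × Bool}

theorem fst_eq_snd_of_vcount_eq_zero (h10 : vcount n w true false = 0)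
    (h01 : vcount n w false true = 0) (j : Fin n) : (w j).1 = (w j).2 := by
  rw [vcount, card_eq_zero, filter_eq_empty_iff] at h10 h01
  have h10j := h10 (mem_univ j)
  have h01j := h01 (mem_univ j)
  revert h10j h01j
  cases (w j).1 <;> cases (w j).2 <;> simp

theorem sate_eq_zero (hw : ∀ j, (w j).1 = (w j).2) : sate n w = 0 := by
  simp [sate, hw]

theorem pmfT_eq_Pr_neyman (hw : ∀ j, (w j).1 = (w j).2) (m : ℕ) :
    pmfT n m w = fun t => Pr n m fun z => neyman n m (fun j => (w j).2) z = t := by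
  have hobs (z : Fin n → Bool) : obsOutcome n w z = fun j => (w j).2 := by
    funext j
    simp [obsOutcome, hw]
  unfold pmfT
  simp only [hobs]

theorem vcount_true_true_eq_card (hw : ∀ j, (w j).1 = (w j).2) :
    vcount n w true true = #(trueSet fun j => (w j).2) := by
  unfold vcount trueSet
  congr 1
  ext i
  simp [hw]

end Tables

/-- In a balanced design, for a count vector of the form
`v = (v₁₁, 0, 0, v₀₀)`, the pmf of `T(v, Z)` is symmetric–decreasing on the lattice
`m⁻¹(2ℤ)` if `v₁₁` is even, and on `m⁻¹(2ℤ + 1)` if `v₁₁` is odd. -/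
theorem stmt12 (m : ℕ) (hm : 0 < m) (n : ℕ) (hn : n = 2 * m)
    (w : Fin n → Bool × Bool)
    (h10 : vcount n w true false = 0) (h01 : vcount n w false true = 0) :
    (Even (vcount n w true true) → SDon (pmfT n m w) (lattEven m) (sate n w)) ∧
      (Odd (vcount n w true true) → SDon (pmfT n m w) (lattOdd m) (sate n w)) := by
  subst hn
  have hw := fst_eq_snd_of_vcount_eq_zero h10 h01
  set Y : Fin (2 * m) → Bool := fun j => (w j).2
  have hSD (L : Set ℝ)
      (hL : ∀ x ∈ L, 0 ≤ x → ∃ s : ℕ, #(trueSet Y) ≤ 2 * s ∧ x = (2 * s - #(trueSet Y)) / m) :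
      SDon (pmfT (2 * m) m w) L (sate (2 * m) w) := by
    rw [sate_eq_zero hw, pmfT_eq_Pr_neyman hw]
    exact SDon_zero_of_neg_of_antitone hm (Pr_neyman_neg Y)
      (fun _ _ => Pr_neyman_antitone hm Y) hL
  rw [vcount_true_true_eq_card hw]
  exact ⟨fun ha => hSD _ fun _ => exists_nat_of_mem_lattEven hm ha,
    fun ha => hSD _ fun _ => exists_nat_of_mem_lattOdd hm ha⟩
end
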